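/- arXiv:2501.00196 — 11 statements merged into one kernel-verified Lean document; each statement's English description precedes it below -/
import Mathlib

section
/- Let G and G' be finite groups of equal order and let p ∈ B̂(G,G'). Then p is (G,G')-invariant if and only if p = p_G ∘ p ∘ p_{G'}. As a consequence, p_G ∘ p ∘ p_{G'} is (G,G')-invariant for every p ∈ B̂(G,G'). -/
/-! Invariance of `p` splits into two conditions: `p b d a c` depends on the outputs only through
`b⁻¹ * d`, and on the inputs only through `a⁻¹ * c`. Composing with `p_G` on the left averages `p`
over the left translates of the outputs, so it produces a correlation with the first property and
fixes every correlation that already has it; `p_{G'}` on the right does the same for the inputs.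
Since `p_G, p_{G'} ∈ B̂` and `B̂` is closed under composition, `p_G ∘ p ∘ p_{G'}` is invariant, and
an invariant `p` is fixed by both averagings. -/

open scoped BigOperators Classical

/-- A winning correlation for the `(G,G')`-bijection game: nonnegative values,
the outputs sum to one for each pair of inputs, and the value is zero whenever
exactly one of `b = d` and `a = c` holds. -/
def IsWinningCorrelation {G G' : Type*} [Group G] [Group G'] [Fintype G] [Fintype G']
    (p : G → G → G' → G' → ℝ) : Prop :=
  (∀ (b d : G) (a c : G'), 0 ≤ p b d a c) ∧
  (∀ a c : G', (∑ b : G, ∑ d : G, p b d a c) = 1) ∧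
  (∀ (b d : G) (a c : G'), ¬(b = d ↔ a = c) → p b d a c = 0)

/-- Membership in `B̂(G,G')`: a winning correlation whose sum over all pairs of
inputs is `1` for every pair of outputs. -/
def MemBhat {G G' : Type*} [Group G] [Group G'] [Fintype G] [Fintype G']
    (p : G → G → G' → G' → ℝ) : Prop :=
  IsWinningCorrelation p ∧ ∀ b d : G, (∑ a : G', ∑ c : G', p b d a c) = 1

/-- A `(G,G')`-invariant correlation: an element of `B̂(G,G')` whose values depend only
on the quotients `b⁻¹ * d ∈ G` and `a⁻¹ * c ∈ G'`. -/
def IsInvariantCorrelation {G G' : Type*} [Group G] [Group G'] [Fintype G] [Fintype G']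
    (p : G → G → G' → G' → ℝ) : Prop :=
  MemBhat p ∧
  ∀ (b d b' d' : G) (a c a' c' : G'),
    b⁻¹ * d = b'⁻¹ * d' → a⁻¹ * c = a'⁻¹ * c' → p b d a c = p b' d' a' c'

/-- The correlation `p_G`. -/
noncomputable def pUnif (G : Type*) [Group G] [Fintype G] : G → G → G → G → ℝ :=
  fun b d a c => if b⁻¹ * d = a⁻¹ * c then ((Fintype.card G : ℝ))⁻¹ else 0

/-- Composition of correlations. -/
def corComp {G G' G'' : Type*} [Fintype G']
    (p₁ : G → G → G' → G' → ℝ) (p₂ : G' → G' → G'' → G'' → ℝ) :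
    G → G → G'' → G'' → ℝ :=
  fun b d a c => ∑ x : G', ∑ y : G', p₁ b d x y * p₂ x y a c

/-- The correlation matrix `D^p` of a `(G,G')`-invariant correlation `p`:
`D^p_{x,y} = |G| ⬝ p(b,d|a,c)` for any `b,d,a,c` with `b⁻¹d = x`, `a⁻¹c = y`
(here realized with `b = a = e`). -/
noncomputable def corrMatrix {G G' : Type*} [Group G] [Group G'] [Fintype G]
    (p : G → G → G' → G' → ℝ) : Matrix G G' ℝ :=
  Matrix.of fun x y => (Fintype.card G : ℝ) * p 1 x 1 y

/-- The deterministic correlation `p_π` associated with a bijection `π` from `G'` to `G`. -/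
noncomputable def detCor {G G' : Type*} (π : G' ≃ G) : G → G → G' → G' → ℝ :=
  fun b d a c => if b = π a ∧ d = π c then 1 else 0

/-- The permutation matrix `P^π` of a bijection `π` from `G'` to `G`. -/
noncomputable def permMatrix {G G' : Type*} (π : G' ≃ G) : Matrix G G' ℝ :=
  Matrix.of fun x y => if x = π y then 1 else 0

/-- The matrix `D^π`: the correlation matrix of the `(G,G')`-invariant correlation
`p_G ∘ p_π ∘ p_{G'}`. -/
noncomputable def Dpi {G G' : Type*} [Group G] [Group G'] [Fintype G] [Fintype G']
    (π : G' ≃ G) : Matrix G G' ℝ :=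
  corrMatrix (corComp (pUnif G) (corComp (detCor π) (pUnif G')))

open Finset

section Composition

variable {G G' G'' : Type*} [Fintype G']

theorem sum_sum_corComp_outputs [Fintype G] (p₁ : G → G → G' → G' → ℝ)
    (p₂ : G' → G' → G'' → G'' → ℝ) (a c : G'') :
    ∑ b, ∑ d, corComp p₁ p₂ b d a c = ∑ x, ∑ y, (∑ b, ∑ d, p₁ b d x y) * p₂ x y a c := by
  simp only [corComp, sum_mul]
  simp only [sum_comm (γ := G) (α := G')]

theorem sum_sum_corComp_inputs [Fintype G''] (p₁ : G → G → G' → G' → ℝ)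
    (p₂ : G' → G' → G'' → G'' → ℝ) (b d : G) :
    ∑ a, ∑ c, corComp p₁ p₂ b d a c = ∑ x, ∑ y, p₁ b d x y * ∑ a, ∑ c, p₂ x y a c := by
  simp only [corComp, mul_sum]
  simp only [sum_comm (γ := G'') (α := G')]

variable [Group G] [Group G'] [Group G''] [Fintype G] [Fintype G'']
  {p₁ : G → G → G' → G' → ℝ} {p₂ : G' → G' → G'' → G'' → ℝ}

theorem IsWinningCorrelation.corComp (h₁ : IsWinningCorrelation p₁)
    (h₂ : IsWinningCorrelation p₂) : IsWinningCorrelation (corComp p₁ p₂) := by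
  obtain ⟨nonneg₁, sum₁, zero₁⟩ := h₁
  obtain ⟨nonneg₂, sum₂, zero₂⟩ := h₂
  refine ⟨fun b d a c => ?_, fun a c => ?_, fun b d a c hne => ?_⟩
  · exact sum_nonneg fun x _ => sum_nonneg fun y _ => mul_nonneg (nonneg₁ ..) (nonneg₂ ..)
  · simp only [sum_sum_corComp_outputs, sum₁, one_mul, sum₂]
  · refine sum_eq_zero fun x _ => sum_eq_zero fun y _ => ?_
    by_cases hxy : b = d ↔ x = y
    · rw [zero₂ x y a c (fun h => hne (hxy.trans h)), mul_zero]
    · rw [zero₁ b d x y hxy, zero_mul]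

theorem MemBhat.corComp (h₁ : MemBhat p₁) (h₂ : MemBhat p₂) : MemBhat (corComp p₁ p₂) :=
  ⟨h₁.1.corComp h₂.1, fun b d => by simp only [sum_sum_corComp_inputs, h₂.2, mul_one, h₁.2]⟩

end Composition

section Uniform

variable {G : Type*} [Group G] [Fintype G]

theorem memBhat_pUnif : MemBhat (pUnif G) := by
  have hcard : (Fintype.card G : ℝ) ≠ 0 := Nat.cast_ne_zero.2 Fintype.card_ne_zero
  refine ⟨⟨fun b d a c => ?_, fun a c => ?_, fun b d a c hne => ?_⟩, fun b d => ?_⟩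
  · unfold pUnif; split_ifs <;> positivity
  · simp only [pUnif, inv_mul_eq_iff_eq_mul, sum_ite_eq', mem_univ, if_true, sum_const,
      card_univ, nsmul_eq_mul, mul_inv_cancel₀ hcard]
  · refine if_neg fun h => hne ?_
    rw [← inv_mul_eq_one, h, inv_mul_eq_one]
  · simp only [pUnif, eq_inv_mul_iff_mul_eq, sum_ite_eq, mem_univ, if_true, sum_const,
      card_univ, nsmul_eq_mul, mul_inv_cancel₀ hcard]

end Uniform

section Quotients

variable {G G' α : Type*} [Group G] [Group G']

def DependsOnLeftQuotient (p : G → G → α → α → ℝ) : Prop :=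
  ∀ (b d b' d' : G) (a c : α), b⁻¹ * d = b'⁻¹ * d' → p b d a c = p b' d' a c

def DependsOnRightQuotient (p : α → α → G' → G' → ℝ) : Prop :=
  ∀ (b d : α) (a c a' c' : G'), a⁻¹ * c = a'⁻¹ * c' → p b d a c = p b d a' c'

theorem isInvariantCorrelation_iff [Fintype G] [Fintype G'] (p : G → G → G' → G' → ℝ) :
    IsInvariantCorrelation p ↔
      MemBhat p ∧ DependsOnLeftQuotient p ∧ DependsOnRightQuotient p :=
  ⟨fun ⟨hp, hinv⟩ => ⟨hp, fun b d b' d' a c hbd => hinv b d b' d' a c a c hbd rfl,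
      fun b d a c a' c' hac => hinv b d b d a c a' c' rfl hac⟩,
    fun ⟨hp, hl, hr⟩ => ⟨hp, fun b d b' d' a c a' c' hbd hac =>
      (hl b d b' d' a c hbd).trans (hr b' d' a c a' c' hac)⟩⟩

theorem dependsOnLeftQuotient_pUnif [Fintype G] : DependsOnLeftQuotient (pUnif G) :=
  fun b d b' d' a c hbd => by simp only [pUnif, hbd]

theorem dependsOnRightQuotient_pUnif [Fintype G'] : DependsOnRightQuotient (pUnif G') :=
  fun b d a c a' c' hac => by simp only [pUnif, hac]

theorem DependsOnLeftQuotient.corComp {β : Type*} [Fintype α] {p₁ : G → G → α → α → ℝ}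
    (h : DependsOnLeftQuotient p₁) (p₂ : α → α → β → β → ℝ) :
    DependsOnLeftQuotient (corComp p₁ p₂) :=
  fun b d b' d' a c hbd => by simp only [_root_.corComp, h b d b' d' _ _ hbd]

theorem DependsOnRightQuotient.corComp {β : Type*} [Fintype β] (p₁ : α → α → β → β → ℝ)
    {p₂ : β → β → G' → G' → ℝ} (h : DependsOnRightQuotient p₂) :
    DependsOnRightQuotient (corComp p₁ p₂) :=
  fun b d a c a' c' hac => by simp only [_root_.corComp, h _ _ a c a' c' hac]

theorem pUnif_corComp_eq_self [Fintype G] {r : G → G → α → α → ℝ}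
    (h : DependsOnLeftQuotient r) : corComp (pUnif G) r = r := by
  have hcard : (Fintype.card G : ℝ) ≠ 0 := Nat.cast_ne_zero.2 Fintype.card_ne_zero
  funext b d a c
  have shift : ∀ x : G, r x (x * (b⁻¹ * d)) a c = r b d a c :=
    fun x => h _ _ _ _ a c (by group)
  simp only [corComp, pUnif, eq_inv_mul_iff_mul_eq, ite_mul, zero_mul, sum_ite_eq, mem_univ,
    if_true, shift, sum_const, card_univ, nsmul_eq_mul]
  field_simp

theorem corComp_pUnif_eq_self [Fintype G'] {r : α → α → G' → G' → ℝ}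
    (h : DependsOnRightQuotient r) : corComp r (pUnif G') = r := by
  have hcard : (Fintype.card G' : ℝ) ≠ 0 := Nat.cast_ne_zero.2 Fintype.card_ne_zero
  funext b d a c
  have shift : ∀ u : G', r b d u (u * (a⁻¹ * c)) = r b d a c :=
    fun u => h b d _ _ a c (by group)
  simp only [corComp, pUnif, inv_mul_eq_iff_eq_mul, mul_ite, mul_zero, sum_ite_eq', mem_univ,
    if_true, shift, sum_const, card_univ, nsmul_eq_mul]
  field_simp

end Quotients

theorem stmt0_general {G G' : Type*} [Group G] [Group G'] [Fintype G] [Fintype G'] :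
    (∀ p : G → G → G' → G' → ℝ, MemBhat p →
      (IsInvariantCorrelation p ↔ p = corComp (pUnif G) (corComp p (pUnif G')))) ∧
    (∀ p : G → G → G' → G' → ℝ, MemBhat p →
      IsInvariantCorrelation (corComp (pUnif G) (corComp p (pUnif G')))) := by
  have twirl_invariant : ∀ p : G → G → G' → G' → ℝ, MemBhat p →
      IsInvariantCorrelation (corComp (pUnif G) (corComp p (pUnif G'))) := fun p hp =>
    (isInvariantCorrelation_iff _).2
      ⟨memBhat_pUnif.corComp (hp.corComp memBhat_pUnif),
        (dependsOnLeftQuotient_pUnif (G := G)).corComp _,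
        (DependsOnRightQuotient.corComp p dependsOnRightQuotient_pUnif).corComp _⟩
  refine ⟨fun p hp => ⟨fun hinv => ?_, fun h => h ▸ twirl_invariant p hp⟩, twirl_invariant⟩
  obtain ⟨-, hleft, hright⟩ := (isInvariantCorrelation_iff p).1 hinv
  rw [corComp_pUnif_eq_self hright, pUnif_corComp_eq_self hleft]

/-- For finite groups `G`, `G'` of equal order and `p ∈ B̂(G,G')`,
`p` is `(G,G')`-invariant iff `p = p_G ∘ p ∘ p_{G'}`; consequently `p_G ∘ p ∘ p_{G'}`
is `(G,G')`-invariant for every `p ∈ B̂(G,G')`. -/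
theorem stmt0 {G G' : Type*} [Group G] [Group G'] [Fintype G] [Fintype G']
    (hcard : Fintype.card G = Fintype.card G') :
    (∀ p : G → G → G' → G' → ℝ, MemBhat p →
      (IsInvariantCorrelation p ↔ p = corComp (pUnif G) (corComp p (pUnif G')))) ∧
    (∀ p : G → G → G' → G' → ℝ, MemBhat p →
      IsInvariantCorrelation (corComp (pUnif G) (corComp p (pUnif G')))) :=
  stmt0_general
end

section
/- Let G, G', and G'' be finite groups of equal order, let p₁ be a (G,G')-invariant correlation and p₂ a (G',G'')-invariant correlation. Then: (1) the correlation matrix D^{p₁} is doubly stochastic (all entries nonnegative, every row sum and every column sum equal to 1) and D^{p₁}_{e,e} = 1; (2) D^{p_G} is the identity matrix; (3) p₁ ∘ p₂ is a (G,G'')-invariant correlation and D^{p₁∘p₂} = D^{p₁}·D^{p₂}. -/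
open scoped BigOperators Classical

lemma sum_shift {G : Type*} [Group G] [Fintype G] (f : G → ℝ) (b : G) :
    ∑ d : G, f (b⁻¹ * d) = ∑ x : G, f x :=
  Equiv.sum_comp (Equiv.mulLeft b⁻¹) f

lemma sum_swap4 {α β : Type*} [Fintype α] [Fintype β] (F : α → α → β → β → ℝ) :
    (∑ b : α, ∑ d : α, ∑ x : β, ∑ y : β, F b d x y)
    = ∑ x : β, ∑ y : β, ∑ b : α, ∑ d : α, F b d x y := by
  calc (∑ b : α, ∑ d : α, ∑ x : β, ∑ y : β, F b d x y)
      = ∑ b : α, ∑ x : β, ∑ d : α, ∑ y : β, F b d x y :=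
        Finset.sum_congr rfl fun b _ => Finset.sum_comm
    _ = ∑ x : β, ∑ b : α, ∑ d : α, ∑ y : β, F b d x y := Finset.sum_comm
    _ = ∑ x : β, ∑ b : α, ∑ y : β, ∑ d : α, F b d x y :=
        Finset.sum_congr rfl fun x _ => Finset.sum_congr rfl fun b _ => Finset.sum_comm
    _ = ∑ x : β, ∑ y : β, ∑ b : α, ∑ d : α, F b d x y :=
        Finset.sum_congr rfl fun x _ => Finset.sum_comm

/-- Basic facts about correlation matrices: `D^{p₁}` is doubly stochastic
with `D^{p₁}_{e,e} = 1`; `D^{p_G}` is the identity matrix; `p₁ ∘ p₂` is `(G,G'')`-invariant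
and `D^{p₁∘p₂} = D^{p₁} ⬝ D^{p₂}`. -/
theorem stmt1 {G G' G'' : Type*} [Group G] [Group G'] [Group G'']
    [Fintype G] [Fintype G'] [Fintype G''] [DecidableEq G]
    (hcard : Fintype.card G = Fintype.card G')
    (hcard' : Fintype.card G' = Fintype.card G'')
    (p₁ : G → G → G' → G' → ℝ) (p₂ : G' → G' → G'' → G'' → ℝ)
    (h₁ : IsInvariantCorrelation p₁) (h₂ : IsInvariantCorrelation p₂) :
    ((∀ (x : G) (y : G'), 0 ≤ corrMatrix p₁ x y) ∧
      (∀ x : G, (∑ y : G', corrMatrix p₁ x y) = 1) ∧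
      (∀ y : G', (∑ x : G, corrMatrix p₁ x y) = 1) ∧
      corrMatrix p₁ 1 1 = 1) ∧
    (corrMatrix (pUnif G) = (1 : Matrix G G ℝ)) ∧
    (IsInvariantCorrelation (corComp p₁ p₂) ∧
      corrMatrix (corComp p₁ p₂) = corrMatrix p₁ * corrMatrix p₂) := by
  obtain ⟨⟨⟨hpos₁, hout₁, hwin₁⟩, hin₁⟩, hinv₁⟩ := h₁
  obtain ⟨⟨⟨hpos₂, hout₂, hwin₂⟩, hin₂⟩, hinv₂⟩ := h₂
  set nG : ℝ := (Fintype.card G : ℝ) with hnG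
  set nG' : ℝ := (Fintype.card G' : ℝ) with hnG'
  have hG0 : (0:ℝ) < nG := by positivity
  -- row sums (times card G')
  have hrow : ∀ x : G, nG' * ∑ y : G', p₁ 1 x 1 y = 1 := by
    intro x
    have h := hin₁ 1 x
    calc nG' * ∑ y : G', p₁ 1 x 1 y
        = ∑ a : G', ∑ y : G', p₁ 1 x 1 y := by
          rw [Finset.sum_const, Finset.card_univ, nsmul_eq_mul]
      _ = ∑ a : G', ∑ c : G', p₁ 1 x a c := by
          refine Finset.sum_congr rfl fun a _ => ?_
          rw [← sum_shift (fun y => p₁ 1 x 1 y) a]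
          exact Finset.sum_congr rfl fun c _ =>
            (hinv₁ 1 x 1 x a c 1 (a⁻¹ * c) rfl (by group)).symm
      _ = 1 := h
  -- column sums (times card G)
  have hcol : ∀ y : G', nG * ∑ x : G, p₁ 1 x 1 y = 1 := by
    intro y
    have h := hout₁ 1 y
    calc nG * ∑ x : G, p₁ 1 x 1 y
        = ∑ b : G, ∑ x : G, p₁ 1 x 1 y := by
          rw [Finset.sum_const, Finset.card_univ, nsmul_eq_mul]
      _ = ∑ b : G, ∑ d : G, p₁ b d 1 y := by
          refine Finset.sum_congr rfl fun b _ => ?_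
          rw [← sum_shift (fun x => p₁ 1 x 1 y) b]
          exact Finset.sum_congr rfl fun d _ =>
            hinv₁ 1 (b⁻¹ * d) b d 1 y 1 y (by group) rfl
      _ = 1 := h
  refine ⟨⟨fun x y => ?_, fun x => ?_, fun y => ?_, ?_⟩, ?_, ?_, ?_⟩
  · exact mul_nonneg (le_of_lt hG0) (hpos₁ 1 x 1 y)
  · -- row sum of corrMatrix
    rw [show (∑ y : G', corrMatrix p₁ x y) = nG * ∑ y : G', p₁ 1 x 1 y by
      rw [Finset.mul_sum]; rfl]
    rw [hnG, hcard, ← hnG', hrow]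
  · rw [show (∑ x : G, corrMatrix p₁ x y) = nG * ∑ x : G, p₁ 1 x 1 y by
      rw [Finset.mul_sum]; rfl]
    exact hcol y
  · -- D_{1,1} = 1
    have h := hrow 1
    have hz : ∀ y : G', y ≠ 1 → p₁ 1 1 1 y = 0 := fun y hy =>
      hwin₁ 1 1 1 y (by simp [hy.symm])
    have : (∑ y : G', p₁ 1 1 1 y) = p₁ 1 1 1 1 :=
      Finset.sum_eq_single 1 (fun y _ hy => hz y hy) (by simp)
    rw [this] at h
    show nG * p₁ 1 1 1 1 = 1
    rw [hnG, hcard, ← hnG']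
    exact h
  · -- corrMatrix pUnif = 1
    ext x y
    simp only [corrMatrix, pUnif, Matrix.of_apply, Matrix.one_apply, one_mul, inv_one]
    by_cases h : x = y
    · simp [h, mul_inv_cancel₀ (ne_of_gt hG0)]
    · simp [h, fun hxy => h hxy]
  · -- invariance of composition
    refine ⟨⟨⟨?_, ?_, ?_⟩, ?_⟩, ?_⟩
    · intro b d a c
      exact Finset.sum_nonneg fun x _ => Finset.sum_nonneg fun y _ =>
        mul_nonneg (hpos₁ b d x y) (hpos₂ x y a c)
    · intro a c
      simp only [corComp]
      rw [sum_swap4 (fun b d x y => p₁ b d x y * p₂ x y a c)]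
      calc ∑ x : G', ∑ y : G', ∑ b : G, ∑ d : G, p₁ b d x y * p₂ x y a c
          = ∑ x : G', ∑ y : G', p₂ x y a c := by
            refine Finset.sum_congr rfl fun x _ => Finset.sum_congr rfl fun y _ => ?_
            simp only [← Finset.sum_mul]
            rw [hout₁ x y, one_mul]
        _ = 1 := hout₂ a c
    · intro b d a c hbd
      refine Finset.sum_eq_zero fun x _ => Finset.sum_eq_zero fun y _ => ?_
      by_cases hbd2 : b = d
      · by_cases hxy : x = y
        · rw [hwin₂ x y a c (by tauto), mul_zero]
        · rw [hwin₁ b d x y (by tauto), zero_mul]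
      · by_cases hxy : x = y
        · rw [hwin₁ b d x y (by tauto), zero_mul]
        · rw [hwin₂ x y a c (by tauto), mul_zero]
    · intro b d
      simp only [corComp]
      rw [sum_swap4 (fun a c x y => p₁ b d x y * p₂ x y a c)]
      calc ∑ x : G', ∑ y : G', ∑ a : G'', ∑ c : G'', p₁ b d x y * p₂ x y a c
          = ∑ x : G', ∑ y : G', p₁ b d x y := by
            refine Finset.sum_congr rfl fun x _ => Finset.sum_congr rfl fun y _ => ?_
            simp only [← Finset.mul_sum]
            rw [hin₂ x y, mul_one]
        _ = 1 := hin₁ b d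
    · intro b d b' d' a c a' c' hbd hac
      refine Finset.sum_congr rfl fun x _ => Finset.sum_congr rfl fun y _ => ?_
      rw [hinv₁ b d b' d' x y x y hbd rfl, hinv₂ x y x y a c a' c' rfl hac]
  · -- matrix of composition
    ext x z
    show nG * corComp p₁ p₂ 1 x 1 z = _
    rw [Matrix.mul_apply]
    have hterm : ∀ u v : G', p₁ 1 x u v * p₂ u v 1 z
        = p₁ 1 x 1 (u⁻¹ * v) * p₂ 1 (u⁻¹ * v) 1 z := fun u v => by
      rw [hinv₁ 1 x 1 x u v 1 (u⁻¹ * v) rfl (by group),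
        hinv₂ u v 1 (u⁻¹ * v) 1 z 1 z (by group) rfl]
    calc nG * corComp p₁ p₂ 1 x 1 z
        = nG * ∑ u : G', ∑ y : G', p₁ 1 x 1 y * p₂ 1 y 1 z := by
          unfold corComp
          congr 1
          refine Finset.sum_congr rfl fun u _ => ?_
          rw [← sum_shift (fun y => p₁ 1 x 1 y * p₂ 1 y 1 z) u]
          exact Finset.sum_congr rfl fun v _ => hterm u v
      _ = nG * (nG' * ∑ y : G', p₁ 1 x 1 y * p₂ 1 y 1 z) := by
          rw [Finset.sum_const, Finset.card_univ, nsmul_eq_mul]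
      _ = ∑ y : G', corrMatrix p₁ x y * corrMatrix p₂ y z := by
          simp only [corrMatrix, Matrix.of_apply, Finset.mul_sum]
          exact Finset.sum_congr rfl fun y _ => by ring
end

section
/- Let G and G' be finite groups of equal order and let π ∈ bij(G,G'). Then D^π = (1/|G|) ∑_{g∈G'} P^{π(g)⁻¹} · P^π · P^g, where P^{π(g)⁻¹} denotes P^{τ_{π(g)⁻¹}} (a G × G matrix) and P^g denotes P^{τ_g} (a G' × G' matrix). -/
/-!
Composing with `p_π` only relabels the inputs through `π`, and each factor `p_G`, `p_{G'}`
pins one output to a left translate of the other, so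
`D^π_{x,y} = |G'|⁻¹ · #{g ∈ G' | π(g) x = π(g y)}`.
The product `P^{π(g)⁻¹} P^π P^g` is the permutation matrix of `y ↦ π(g)⁻¹ π(g y)`,
whose `(x, y)` entry is the indicator of the same condition.
-/

open scoped BigOperators Classical

open Matrix

section PermMatrix

variable {α β γ : Type*}

lemma permMatrix_apply (π : β ≃ α) (x : α) (y : β) :
    permMatrix π x y = if x = π y then 1 else 0 :=
  rfl

lemma permMatrix_mul_permMatrix [Fintype β] (σ : β ≃ α) (τ : γ ≃ β) :
    permMatrix σ * permMatrix τ = permMatrix (τ.trans σ) := by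
  ext x z
  simp [mul_apply, permMatrix_apply]
  -- the two sides differ only in their `Decidable` instances
  congr

lemma permMatrix_mulLeft_conj_apply {G G' : Type*} [Group G] [Group G'] [Fintype G]
    [Fintype G'] (π : G' ≃ G) (g y : G') (x : G) :
    (permMatrix (Equiv.mulLeft ((π g)⁻¹) : G ≃ G) * permMatrix π *
        permMatrix (Equiv.mulLeft g : G' ≃ G')) x y =
      if π g * x = π (g * y) then 1 else 0 := by
  simp only [permMatrix_mul_permMatrix, permMatrix_apply, Equiv.trans_apply,
    Equiv.coe_mulLeft, eq_inv_mul_iff_mul_eq]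

end PermMatrix

lemma corComp_detCor_apply {α β γ : Type*} [Fintype β] (π : β ≃ α)
    (q : β → β → γ → γ → ℝ) (b d : α) (a c : γ) :
    corComp (detCor π) q b d a c = q (π.symm b) (π.symm d) a c := by
  simp [corComp, detCor, ← Equiv.symm_apply_eq, ite_and]

lemma corComp_pUnif_apply {G γ : Type*} [Group G] [Fintype G]
    (q : G → G → γ → γ → ℝ) (b d : G) (a c : γ) :
    corComp (pUnif G) q b d a c = (Fintype.card G : ℝ)⁻¹ * ∑ s, q s (s * (b⁻¹ * d)) a c := by
  simp [corComp, pUnif, Finset.mul_sum, eq_inv_mul_iff_mul_eq]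

lemma Dpi_apply {G G' : Type*} [Group G] [Group G'] [Fintype G] [Fintype G']
    (π : G' ≃ G) (x : G) (y : G') :
    Dpi π x y = (Fintype.card G' : ℝ)⁻¹ * ∑ g : G', if π g * x = π (g * y) then 1 else 0 := by
  have hG : (Fintype.card G : ℝ) ≠ 0 := Nat.cast_ne_zero.mpr Fintype.card_ne_zero
  rw [Dpi, corrMatrix, of_apply, corComp_pUnif_apply, mul_inv_cancel_left₀ hG,
    ← π.sum_comp, Finset.mul_sum]
  simp only [corComp_detCor_apply, Equiv.symm_apply_apply, pUnif, inv_one, one_mul,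
    inv_mul_eq_iff_eq_mul, Equiv.symm_apply_eq, mul_ite, mul_one, mul_zero]

/-- `D^π = (1/|G|) ∑_{g ∈ G'} P^{τ_{π(g)⁻¹}} ⬝ P^π ⬝ P^{τ_g}`. -/
theorem stmt2 {G G' : Type*} [Group G] [Group G'] [Fintype G] [Fintype G']
    (hcard : Fintype.card G = Fintype.card G') (π : G' ≃ G) :
    Dpi π = (Fintype.card G : ℝ)⁻¹ •
      ∑ g : G',
        permMatrix (Equiv.mulLeft ((π g)⁻¹) : G ≃ G) * permMatrix π *
          permMatrix (Equiv.mulLeft g : G' ≃ G') := by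
  ext x y
  simp only [Dpi_apply, Matrix.smul_apply, Matrix.sum_apply, permMatrix_mulLeft_conj_apply,
    smul_eq_mul, hcard]
end

section
/- Let G and G' be finite groups with |G| = |G'| = n, and let π ∈ bij(G,G'). Then D^π = (1/n) · (R^G)^T · (P^π ⊗ P^π) · R^{G'}, where P^π ⊗ P^π is the Kronecker product, a matrix with rows indexed by G × G and columns indexed by G' × G'. -/
open scoped BigOperators Classical

/-- The reduction matrix `R^G` of a finite group `G`. -/
noncomputable def redMatrix (G : Type*) [Group G] : Matrix (G × G) G ℝ :=
  Matrix.of fun ab c => if ab.2⁻¹ * ab.1 = c then 1 else 0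

open Matrix Kronecker in
/-- `D^π = (1/n) ⬝ (R^G)ᵀ ⬝ (P^π ⊗ P^π) ⬝ R^{G'}`. -/
theorem stmt6 {G G' : Type*} [Group G] [Group G'] [Fintype G] [Fintype G']
    (hcard : Fintype.card G = Fintype.card G') (π : G' ≃ G) :
    Dpi π = (Fintype.card G : ℝ)⁻¹ •
      ((redMatrix G)ᵀ * (permMatrix π ⊗ₖ permMatrix π) * redMatrix G') := by
  have hG : ((Fintype.card G : ℝ)) ≠ 0 := by
    exact_mod_cast Fintype.card_ne_zero
  ext x y
  simp only [Dpi, corrMatrix, corComp, detCor, pUnif, redMatrix, permMatrix, Matrix.of_apply,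
    Matrix.smul_apply, Matrix.mul_apply, Matrix.transpose_apply, Matrix.kroneckerMap_apply,
    smul_eq_mul, Fintype.sum_prod_type, inv_one, one_mul, ite_mul, mul_ite,
    mul_one, mul_zero, zero_mul, Finset.sum_ite_eq, Finset.sum_ite_eq',
    Finset.mem_univ, if_true]
  have h1 : ∀ (x1 x2 : G), (x = x1⁻¹ * x2) = (x2 = x1 * x) := by
    intro x1 x2
    simp [eq_inv_mul_iff_mul_eq, eq_comm]
  have hx : ∀ (p : Prop) [Decidable p] (b : G) (f : G → ℝ),
      (∑ x1 : G, if p then if x1 = b then f x1 else 0 else 0) = if p then f b else 0 := by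
    intro p _ b f
    split <;> simp
  simp only [h1, Finset.sum_ite_eq', Finset.mem_univ, if_true]
  rw [← Finset.mul_sum]
  conv_lhs =>
    rw [← mul_assoc, mul_inv_cancel₀ hG, one_mul, Finset.sum_comm]
    enter [2, a]
    rw [Finset.sum_comm]
    enter [2, c]
    simp only [ite_and]
    rw [hx]
  have h2 : ∀ (a c : G'), ((π a)⁻¹ * π c = x) ↔ (π a * x = π c) := by
    intro a c
    rw [inv_mul_eq_iff_eq_mul, eq_comm]
  rw [Finset.sum_comm]
  simp only [h2, hcard, Finset.mul_sum, mul_ite, mul_one, mul_zero]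
end

section
/- Let G and G' be finite groups of equal order, let p be a (G,G')-invariant correlation, and let X and Y be digraphs on vertex sets G and G' respectively. Then p wins the (X,Y)-isomorphism game if and only if there exist subsets C ⊆ G and C' ⊆ G' such that X = Cay(G,C), Y = Cay(G',C'), and D^p·𝟙_{C'} = 𝟙_C, where 𝟙_C ∈ ℝ^G and 𝟙_{C'} ∈ ℝ^{G'} denote the characteristic (0/1) vectors of C and C'. -/
open scoped BigOperators Classical

/-- A correlation `p` for the `(G,G')`-bijection game wins the `(X,Y)`-isomorphism game
for digraphs `X` on `G` and `Y` on `G'` if whenever `p(b,d|a,c) ≠ 0` one has `b = d ↔ a = c`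
and `(b,d)` is an arc of `X` iff `(a,c)` is an arc of `Y`. -/
def WinsIsoGame {G G' : Type*} (p : G → G → G' → G' → ℝ)
    (X : G → G → Prop) (Y : G' → G' → Prop) : Prop :=
  ∀ (b d : G) (a c : G'), p b d a c ≠ 0 → ((b = d ↔ a = c) ∧ (X b d ↔ Y a c))

/-- A `(G,G')`-invariant correlation `p` wins the `(X,Y)`-isomorphism game
iff `X` and `Y` are Cayley digraphs `Cay(G,C)`, `Cay(G',C')` for subsets `C ⊆ G`, `C' ⊆ G'`
with `D^p ⬝ 𝟙_{C'} = 𝟙_C`. -/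
theorem stmt7 {G G' : Type*} [Group G] [Group G'] [Fintype G] [Fintype G']
    [DecidableEq G] [DecidableEq G']
    (hcard : Fintype.card G = Fintype.card G')
    (p : G → G → G' → G' → ℝ) (hp : IsInvariantCorrelation p)
    (X : G → G → Prop) (Y : G' → G' → Prop) :
    WinsIsoGame p X Y ↔
      ∃ (C : Finset G) (C' : Finset G'),
        (∀ a b : G, X a b ↔ a⁻¹ * b ∈ C) ∧
        (∀ a b : G', Y a b ↔ a⁻¹ * b ∈ C') ∧
        (corrMatrix p).mulVec (fun y => if y ∈ C' then (1 : ℝ) else 0) =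
          (fun x => if x ∈ C then (1 : ℝ) else 0) := by
  obtain ⟨⟨⟨hnn, houtsum, hwin⟩, hinsum⟩, hinvar⟩ := hp
  have hcG : (Fintype.card G : ℝ) ≠ 0 := by exact_mod_cast Fintype.card_ne_zero
  have hinv : ∀ (b d : G) (a c : G'), p b d a c = p 1 (b⁻¹ * d) 1 (a⁻¹ * c) := by
    intro b d a c
    exact hinvar b d 1 (b⁻¹ * d) a c 1 (a⁻¹ * c) (by group) (by group)
  set D := corrMatrix p with hD
  have hDval : ∀ (x : G) (y : G'), D x y = (Fintype.card G : ℝ) * p 1 x 1 y :=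
    fun x y => rfl
  have hDnn : ∀ (x : G) (y : G'), 0 ≤ D x y := fun x y =>
    mul_nonneg (Nat.cast_nonneg _) (hnn _ _ _ _)
  have hDrow : ∀ x : G, ∑ y : G', D x y = 1 := by
    intro x
    have h2 : ∀ a : G', ∑ c : G', p 1 x a c = ∑ y : G', p 1 x 1 y := by
      intro a
      calc ∑ c : G', p 1 x a c = ∑ c : G', p 1 x 1 (a⁻¹ * c) := by
            refine Finset.sum_congr rfl fun c _ => ?_
            rw [hinv 1 x a c]; simp
        _ = ∑ y : G', p 1 x 1 y :=
            Fintype.sum_equiv (Equiv.mulLeft a⁻¹) _ _ (fun c => rfl)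
    have h1 : (Fintype.card G' : ℝ) * ∑ y : G', p 1 x 1 y = 1 := by
      have h := hinsum 1 x
      rw [Finset.sum_congr rfl (fun a _ => h2 a)] at h
      simpa [Finset.sum_const, Finset.card_univ, nsmul_eq_mul] using h
    calc ∑ y : G', D x y = (Fintype.card G : ℝ) * ∑ y : G', p 1 x 1 y := by
          rw [Finset.mul_sum]; exact Finset.sum_congr rfl fun y _ => hDval x y
      _ = 1 := by rw [hcard]; exact h1
  have hDcol : ∀ y : G', ∑ x : G, D x y = 1 := by
    intro y
    have h2 : ∀ b : G, ∑ d : G, p b d 1 y = ∑ x : G, p 1 x 1 y := by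
      intro b
      calc ∑ d : G, p b d 1 y = ∑ d : G, p 1 (b⁻¹ * d) 1 y := by
            refine Finset.sum_congr rfl fun d _ => ?_
            rw [hinv b d 1 y]; simp
        _ = ∑ x : G, p 1 x 1 y :=
            Fintype.sum_equiv (Equiv.mulLeft b⁻¹) _ _ (fun d => rfl)
    have h1 : (Fintype.card G : ℝ) * ∑ x : G, p 1 x 1 y = 1 := by
      have h := houtsum 1 y
      rw [Finset.sum_congr rfl (fun b _ => h2 b)] at h
      simpa [Finset.sum_const, Finset.card_univ, nsmul_eq_mul] using h
    calc ∑ x : G, D x y = (Fintype.card G : ℝ) * ∑ x : G, p 1 x 1 y := by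
          rw [Finset.mul_sum]; exact Finset.sum_congr rfl fun x _ => hDval x y
      _ = 1 := h1
  constructor
  · intro hwins
    have hkey : ∀ (b d : G) (a c : G'), p 1 (b⁻¹ * d) 1 (a⁻¹ * c) ≠ 0 →
        (X b d ↔ Y a c) := by
      intro b d a c hne
      exact (hwins b d a c (by rw [hinv]; exact hne)).2
    have hDkey : ∀ (x : G) (y : G'), D x y ≠ 0 → (X 1 x ↔ Y 1 y) := by
      intro x y h
      have hpne : p 1 x 1 y ≠ 0 := fun h0 => h (by rw [hDval, h0, mul_zero])
      have := hkey 1 x 1 y (by simpa using hpne)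
      simpa using this
    have hX : ∀ b d : G, X b d ↔ X 1 (b⁻¹ * d) := by
      intro b d
      obtain ⟨y, _, hy⟩ := Finset.exists_ne_zero_of_sum_ne_zero
        (s := Finset.univ) (f := fun y => D (b⁻¹ * d) y)
        (by rw [hDrow (b⁻¹ * d)]; exact one_ne_zero)
      have hpne : p 1 (b⁻¹ * d) 1 y ≠ 0 := fun h0 => hy (by rw [hDval, h0, mul_zero])
      have e1 : X b d ↔ Y 1 y := hkey b d 1 y (by simpa using hpne)
      have e2 : X 1 (b⁻¹ * d) ↔ Y 1 y := hkey 1 (b⁻¹ * d) 1 y (by simpa using hpne)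
      rw [e1, e2]
    have hY : ∀ a c : G', Y a c ↔ Y 1 (a⁻¹ * c) := by
      intro a c
      obtain ⟨x, _, hx⟩ := Finset.exists_ne_zero_of_sum_ne_zero
        (s := Finset.univ) (f := fun x => D x (a⁻¹ * c))
        (by rw [hDcol (a⁻¹ * c)]; exact one_ne_zero)
      have hpne : p 1 x 1 (a⁻¹ * c) ≠ 0 := fun h0 => hx (by rw [hDval, h0, mul_zero])
      have e1 : X 1 x ↔ Y a c := hkey 1 x a c (by simpa using hpne)
      have e2 : X 1 x ↔ Y 1 (a⁻¹ * c) := hkey 1 x 1 (a⁻¹ * c) (by simpa using hpne)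
      rw [← e1, ← e2]
    refine ⟨Finset.univ.filter (fun x => X 1 x), Finset.univ.filter (fun y => Y 1 y),
      ?_, ?_, ?_⟩
    · intro a b
      simp only [Finset.mem_filter, Finset.mem_univ, true_and]
      exact hX a b
    · intro a b
      simp only [Finset.mem_filter, Finset.mem_univ, true_and]
      exact hY a b
    · funext x
      simp only [Matrix.mulVec, dotProduct, Finset.mem_filter, Finset.mem_univ,
        true_and]
      by_cases hx : X 1 x
      · rw [if_pos hx]
        have hterm : ∀ y : G', D x y * (if Y 1 y then (1:ℝ) else 0) = D x y := by
          intro y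
          by_cases hd : D x y = 0
          · rw [hd, zero_mul]
          · rw [if_pos ((hDkey x y hd).mp hx), mul_one]
        rw [Finset.sum_congr rfl (fun y _ => hterm y)]
        exact hDrow x
      · rw [if_neg hx]
        refine Finset.sum_eq_zero fun y _ => ?_
        by_cases hd : D x y = 0
        · rw [hd, zero_mul]
        · rw [if_neg (fun hy => hx ((hDkey x y hd).mpr hy)), mul_zero]
  · rintro ⟨C, C', hXC, hYC, heq⟩ b d a c hpne
    refine ⟨?_, ?_⟩
    · by_contra hiff
      exact hpne (hwin b d a c hiff)
    · rw [hXC, hYC]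
      set x := b⁻¹ * d with hxdef
      set y := a⁻¹ * c with hydef
      have hDne : D x y ≠ 0 := by
        rw [hDval]
        exact mul_ne_zero hcG (by rw [← hinv]; exact hpne)
      have heqx := congrFun heq x
      simp only [Matrix.mulVec, dotProduct] at heqx
      by_cases hx : x ∈ C
      · rw [if_pos hx] at heqx
        have hsum0 : ∑ y' : G',
            (D x y' - D x y' * (if y' ∈ C' then (1:ℝ) else 0)) = 0 := by
          rw [Finset.sum_sub_distrib, hDrow, heqx, sub_self]
        have hterm := (Finset.sum_eq_zero_iff_of_nonneg (fun y' _ => by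
          by_cases hy' : y' ∈ C'
          · rw [if_pos hy', mul_one, sub_self]
          · rw [if_neg hy', mul_zero, sub_zero]; exact hDnn x y')).mp hsum0 y
          (Finset.mem_univ y)
        by_cases hy : y ∈ C'
        · exact iff_of_true hx hy
        · exfalso
          rw [if_neg hy, mul_zero, sub_zero] at hterm
          exact hDne hterm
      · rw [if_neg hx] at heqx
        have hterm := (Finset.sum_eq_zero_iff_of_nonneg (fun y' _ => by
          by_cases hy' : y' ∈ C'
          · rw [if_pos hy', mul_one]; exact hDnn x y'
          · rw [if_neg hy', mul_zero])).mp heqx y (Finset.mem_univ y)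
        by_cases hy : y ∈ C'
        · exfalso
          rw [if_pos hy, mul_one] at hterm
          exact hDne hterm
        · exact iff_of_false hx hy
end

section
/- Let G and G' be finite groups of equal order. A matrix U ∈ ℂ^{G×G'} is the transformation matrix of some (G,G')-invariant quantum Latin square if and only if: (1) U is unitary; (2) conj(U_{a,b}) = U_{a⁻¹,b⁻¹} for all a ∈ G and b ∈ G'; and (3) U_{ab,c} = ∑_{x,y∈G' with xy = c} U_{a,x}·U_{b,y} for all a,b ∈ G and c ∈ G'. -/
/-!
Invariance makes every inner product of the square an entry of `U`:
`⟨ψ_{a,b}, ψ_{c,d}⟩ = U_{a⁻¹c, b⁻¹d}`. Parseval's identity in the orthonormal bases formed by the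
rows and columns of `ψ` then yields unitarity of `U` and the convolution rule (3), while (2) is
conjugate symmetry of the inner product.

Conversely, `ψ_{a,b} := (U_{a, y⁻¹b})_y` has Gram entries `U_{a⁻¹c, b⁻¹d}` by (2) and (3). Since
`U_{1,1} = ∑_x |U_{1,x}|² = 1` and the rows and columns of a unitary matrix are unit vectors, the
first row and column of `U` are standard basis vectors, so the rows and columns of `ψ` are
orthonormal.
-/

open scoped BigOperators Classical ComplexOrder

/-- A `(G,G')`-invariant quantum Latin square with entries in `ℂ^{G'}`:
every row and every column forms an orthonormal basis, and the inner product
`⟨ψ_{a,b}, ψ_{c,d}⟩` depends only on `a⁻¹c ∈ G` and `b⁻¹d ∈ G'`. -/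
def IsInvQLS {G G' : Type*} [Group G] [Group G'] [Fintype G] [Fintype G']
    (ψ : G → G' → EuclideanSpace ℂ G') : Prop :=
  (∀ a : G, ∃ B : OrthonormalBasis G' ℂ (EuclideanSpace ℂ G'), ∀ b : G', B b = ψ a b) ∧
  (∀ b : G', ∃ B : OrthonormalBasis G ℂ (EuclideanSpace ℂ G'), ∀ a : G, B a = ψ a b) ∧
  (∀ (a c a' c' : G) (b d b' d' : G'),
    a⁻¹ * c = a'⁻¹ * c' → b⁻¹ * d = b'⁻¹ * d' →
    (inner ℂ (ψ a b) (ψ c d) : ℂ) = inner ℂ (ψ a' b') (ψ c' d'))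

/-- The transformation matrix of a `(G,G')`-invariant quantum Latin square:
`U_{x,y} = ⟨ψ_{a,b}, ψ_{c,d}⟩` for any `a,c ∈ G`, `b,d ∈ G'` with `a⁻¹c = x`, `b⁻¹d = y`
(here realized with `a = e`, `b = e`). -/
noncomputable def transMat {G G' : Type*} [Group G] [Group G'] [Fintype G']
    (ψ : G → G' → EuclideanSpace ℂ G') : Matrix G G' ℂ :=
  Matrix.of fun x y => (inner ℂ (ψ 1 1) (ψ x y) : ℂ)

/-- A `(G,G')`-transformation matrix: `U` is unitary, `conj U_{a,b} = U_{a⁻¹,b⁻¹}`, and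
`U_{ab,c} = ∑_{x y = c} U_{a,x} U_{b,y}`. -/
def IsTransMat {G G' : Type*} [Group G] [Group G'] [Fintype G] [Fintype G']
    [DecidableEq G] [DecidableEq G'] (U : Matrix G G' ℂ) : Prop :=
  (U * U.conjTranspose = 1 ∧ U.conjTranspose * U = 1) ∧
  (∀ (a : G) (b : G'), star (U a b) = U a⁻¹ b⁻¹) ∧
  (∀ (a b : G) (c : G'),
    U (a * b) c = ∑ x : G', ∑ y : G', if x * y = c then U a x * U b y else 0)

theorem Fintype.sum_sum_ite_mul_eq {G R : Type*} [Group G] [Fintype G] [DecidableEq G]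
    [NonUnitalNonAssocSemiring R] (f g : G → R) (c : G) :
    (∑ x, ∑ y, if x * y = c then f x * g y else 0) = ∑ x, f x * g (x⁻¹ * c) := by
  simp_rw [← eq_inv_mul_iff_mul_eq]
  simp

theorem Orthonormal.exists_orthonormalBasis_of_card_eq_finrank {ι 𝕜 E : Type*} [RCLike 𝕜]
    [Fintype ι] [Nonempty ι] [NormedAddCommGroup E] [InnerProductSpace 𝕜 E]
    [FiniteDimensional 𝕜 E] {v : ι → E} (hv : Orthonormal 𝕜 v)
    (hc : Fintype.card ι = Module.finrank 𝕜 E) :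
    ∃ B : OrthonormalBasis ι 𝕜 E, ∀ i, B i = v i := by
  have hb := coe_basisOfOrthonormalOfCardEqFinrank hv hc
  exact ⟨(basisOfOrthonormalOfCardEqFinrank hv hc).toOrthonormalBasis (hb.symm ▸ hv),
    by simp [hb]⟩

theorem Matrix.apply_eq_zero_of_mul_conjTranspose_eq_one {m n : Type*} [Fintype n]
    [DecidableEq m] {U : Matrix m n ℂ} (hU : U * U.conjTranspose = 1) {a : m} {b₀ : n}
    (h : U a b₀ = 1) {b : n} (hb : b ≠ b₀) : U a b = 0 := by
  have hsum : ∑ b, Complex.normSq (U a b) = 1 := by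
    have := congr_fun₂ hU a a
    simp only [Matrix.mul_apply, Matrix.conjTranspose_apply, Matrix.one_apply_eq] at this
    simp_rw [← starRingEnd_apply, Complex.mul_conj] at this
    exact_mod_cast this
  rw [← Finset.add_sum_erase _ _ (Finset.mem_univ b₀), h, Complex.normSq_one,
    add_eq_left] at hsum
  exact Complex.normSq_eq_zero.mp <|
    (Finset.sum_eq_zero_iff_of_nonneg fun _ _ => Complex.normSq_nonneg _).mp hsum b (by simp [hb])

theorem transMat_apply {G G' : Type*} [Group G] [Group G'] [Fintype G']
    (ψ : G → G' → EuclideanSpace ℂ G') (x : G) (y : G') :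
    transMat ψ x y = inner ℂ (ψ 1 1) (ψ x y) :=
  rfl

namespace IsInvQLS

variable {G G' : Type*} [Group G] [Group G'] [Fintype G] [Fintype G']
  {ψ : G → G' → EuclideanSpace ℂ G'}

theorem inner_eq_transMat (hψ : IsInvQLS ψ) (a c : G) (b d : G') :
    inner ℂ (ψ a b) (ψ c d) = transMat ψ (a⁻¹ * c) (b⁻¹ * d) :=
  hψ.2.2 a c 1 (a⁻¹ * c) b d 1 (b⁻¹ * d) (by group) (by group)

theorem sum_inner_row (hψ : IsInvQLS ψ) (a : G) (u v : EuclideanSpace ℂ G') :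
    ∑ b, inner ℂ u (ψ a b) * inner ℂ (ψ a b) v = inner ℂ u v := by
  obtain ⟨B, hB⟩ := hψ.1 a
  simpa only [hB] using B.sum_inner_mul_inner u v

theorem sum_inner_col (hψ : IsInvQLS ψ) (b : G') (u v : EuclideanSpace ℂ G') :
    ∑ a, inner ℂ u (ψ a b) * inner ℂ (ψ a b) v = inner ℂ u v := by
  obtain ⟨B, hB⟩ := hψ.2.1 b
  simpa only [hB] using B.sum_inner_mul_inner u v

theorem transMat_one_left [DecidableEq G'] (hψ : IsInvQLS ψ) (b : G') :
    transMat ψ 1 b = if b = 1 then 1 else 0 := by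
  obtain ⟨B, hB⟩ := hψ.1 1
  rw [transMat_apply, ← hB, ← hB, orthonormal_iff_ite.mp B.orthonormal]
  exact if_congr eq_comm rfl rfl

theorem transMat_one_right [DecidableEq G] (hψ : IsInvQLS ψ) (a : G) :
    transMat ψ a 1 = if a = 1 then 1 else 0 := by
  obtain ⟨B, hB⟩ := hψ.2.1 1
  rw [transMat_apply, ← hB, ← hB, orthonormal_iff_ite.mp B.orthonormal]
  exact if_congr eq_comm rfl rfl

theorem star_transMat (hψ : IsInvQLS ψ) (a : G) (b : G') :
    star (transMat ψ a b) = transMat ψ a⁻¹ b⁻¹ := by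
  rw [transMat_apply, ← starRingEnd_apply, inner_conj_symm, hψ.inner_eq_transMat,
    mul_one, mul_one]

theorem transMat_mul_apply (hψ : IsInvQLS ψ) (a b : G) (c : G') :
    transMat ψ (a * b) c = ∑ x, transMat ψ a x * transMat ψ b (x⁻¹ * c) := by
  rw [transMat_apply, ← hψ.sum_inner_row a]
  simp only [hψ.inner_eq_transMat, inv_one, one_mul, inv_mul_cancel_left]

theorem transMat_mul_conjTranspose [DecidableEq G] (hψ : IsInvQLS ψ) :
    transMat ψ * (transMat ψ).conjTranspose = 1 := by
  ext a c
  calc ∑ b, transMat ψ a b * star (transMat ψ c b)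
      = ∑ b, inner ℂ (ψ 1 1) (ψ a b) * inner ℂ (ψ a b) (ψ (a * c⁻¹) 1) := by
        simp only [hψ.star_transMat, hψ.inner_eq_transMat, inv_one, one_mul, mul_one,
          inv_mul_cancel_left]
    _ = transMat ψ (a * c⁻¹) 1 := hψ.sum_inner_row a _ _
    _ = (1 : Matrix G G ℂ) a c := by
        rw [hψ.transMat_one_right, Matrix.one_apply]
        exact if_congr mul_inv_eq_one rfl rfl

theorem conjTranspose_mul_transMat [DecidableEq G'] (hψ : IsInvQLS ψ) :
    (transMat ψ).conjTranspose * transMat ψ = 1 := by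
  ext b d
  calc ∑ a, star (transMat ψ a b) * transMat ψ a d
      = ∑ a, inner ℂ (ψ 1 1) (ψ a d) * inner ℂ (ψ a d) (ψ 1 (d * b⁻¹)) := by
        simp only [hψ.star_transMat, hψ.inner_eq_transMat, inv_one, one_mul, mul_one,
          inv_mul_cancel_left, mul_comm]
    _ = transMat ψ 1 (d * b⁻¹) := hψ.sum_inner_col d _ _
    _ = (1 : Matrix G' G' ℂ) b d := by
        rw [hψ.transMat_one_left, Matrix.one_apply]
        exact if_congr (mul_inv_eq_one.trans eq_comm) rfl rfl

theorem isTransMat [DecidableEq G] [DecidableEq G'] (hψ : IsInvQLS ψ) :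
    IsTransMat (transMat ψ) :=
  ⟨⟨hψ.transMat_mul_conjTranspose, hψ.conjTranspose_mul_transMat⟩, hψ.star_transMat,
    fun a b c => by rw [Fintype.sum_sum_ite_mul_eq, hψ.transMat_mul_apply]⟩

end IsInvQLS

noncomputable def qlsOfMatrix {G G' : Type*} [Group G'] (U : Matrix G G' ℂ) :
    G → G' → EuclideanSpace ℂ G' :=
  fun a b => WithLp.toLp 2 fun y => U a (y⁻¹ * b)

namespace IsTransMat

variable {G G' : Type*} [Group G] [Group G'] [Fintype G] [Fintype G'] [DecidableEq G]
  [DecidableEq G'] {U : Matrix G G' ℂ}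

theorem apply_mul_eq_sum (hU : IsTransMat U) (a b : G) (c : G') :
    U (a * b) c = ∑ x, U a x * U b (x⁻¹ * c) := by
  rw [hU.2.2, Fintype.sum_sum_ite_mul_eq]

theorem apply_one_one (hU : IsTransMat U) : U 1 1 = 1 :=
  calc U 1 1 = ∑ x, U 1 x * U 1 x⁻¹ := by simpa using hU.apply_mul_eq_sum 1 1 1
    _ = (U * U.conjTranspose) 1 1 := by
        simp only [Matrix.mul_apply, Matrix.conjTranspose_apply, hU.2.1, inv_one]
    _ = 1 := by rw [hU.1.1, Matrix.one_apply_eq]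

theorem apply_one_left (hU : IsTransMat U) (b : G') : U 1 b = if b = 1 then 1 else 0 := by
  split_ifs with hb
  · rw [hb, hU.apply_one_one]
  · exact Matrix.apply_eq_zero_of_mul_conjTranspose_eq_one hU.1.1 hU.apply_one_one hb

theorem apply_one_right (hU : IsTransMat U) (a : G) : U a 1 = if a = 1 then 1 else 0 := by
  split_ifs with ha
  · rw [ha, hU.apply_one_one]
  · have hUstar : U.conjTranspose * U.conjTranspose.conjTranspose = 1 := by
      rw [Matrix.conjTranspose_conjTranspose, hU.1.2]
    have h11 : U.conjTranspose 1 1 = 1 := by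
      rw [Matrix.conjTranspose_apply, hU.apply_one_one, star_one]
    simpa using Matrix.apply_eq_zero_of_mul_conjTranspose_eq_one hUstar h11 ha

theorem inner_qlsOfMatrix (hU : IsTransMat U) (a c : G) (b d : G') :
    inner ℂ (qlsOfMatrix U a b) (qlsOfMatrix U c d) = U (a⁻¹ * c) (b⁻¹ * d) := by
  rw [hU.apply_mul_eq_sum, PiLp.inner_apply]
  refine Fintype.sum_equiv (Equiv.mulLeft b⁻¹) _ _ fun y => ?_
  change U c (y⁻¹ * d) * star (U a (y⁻¹ * b)) =
    U a⁻¹ (b⁻¹ * y) * U c ((b⁻¹ * y)⁻¹ * (b⁻¹ * d))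
  rw [hU.2.1, mul_comm]
  congr 2 <;> group

theorem isInvQLS_qlsOfMatrix (hcard : Fintype.card G = Fintype.card G') (hU : IsTransMat U) :
    IsInvQLS (qlsOfMatrix U) := by
  refine ⟨fun a => ?_, fun b => ?_, fun a c a' c' b d b' d' hac hbd => ?_⟩
  · refine Orthonormal.exists_orthonormalBasis_of_card_eq_finrank ?_ finrank_euclideanSpace.symm
    refine orthonormal_iff_ite.mpr fun b d => ?_
    rw [hU.inner_qlsOfMatrix, inv_mul_cancel, hU.apply_one_left]
    exact if_congr inv_mul_eq_one rfl rfl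
  · refine Orthonormal.exists_orthonormalBasis_of_card_eq_finrank ?_
      (hcard.trans finrank_euclideanSpace.symm)
    refine orthonormal_iff_ite.mpr fun a c => ?_
    rw [hU.inner_qlsOfMatrix, inv_mul_cancel, hU.apply_one_right]
    exact if_congr inv_mul_eq_one rfl rfl
  · rw [hU.inner_qlsOfMatrix, hU.inner_qlsOfMatrix, hac, hbd]

theorem transMat_qlsOfMatrix (hU : IsTransMat U) : transMat (qlsOfMatrix U) = U := by
  ext x y
  rw [transMat_apply, hU.inner_qlsOfMatrix, inv_one, one_mul, inv_one, one_mul]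

end IsTransMat

/-- A matrix `U ∈ ℂ^{G×G'}` is the transformation matrix of some
`(G,G')`-invariant quantum Latin square iff it is a `(G,G')`-transformation matrix,
i.e. (1) `U` is unitary; (2) `conj U_{a,b} = U_{a⁻¹,b⁻¹}`; (3) `U_{ab,c} = ∑_{xy=c} U_{a,x}U_{b,y}`. -/
theorem stmt8 {G G' : Type*} [Group G] [Group G'] [Fintype G] [Fintype G']
    [DecidableEq G] [DecidableEq G']
    (hcard : Fintype.card G = Fintype.card G') (U : Matrix G G' ℂ) :
    (∃ ψ : G → G' → EuclideanSpace ℂ G', IsInvQLS ψ ∧ transMat ψ = U) ↔ IsTransMat U := by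
  constructor
  · rintro ⟨ψ, hψ, rfl⟩
    exact hψ.isTransMat
  · intro hU
    exact ⟨qlsOfMatrix U, hU.isInvQLS_qlsOfMatrix hcard, hU.transMat_qlsOfMatrix⟩
end

section
/- Let G and G' be finite groups, let ρ be a quasi-regular representation of G by d × d complex matrices, and let U be a (G,G')-transformation matrix. Then the map ρ' defined by ρ'(b) := ∑_{a∈G} U_{a,b}·ρ(a) is a quasi-regular representation of G'. -/
open scoped BigOperators Classical

/-- A quasi-regular representation of `G` by `d × d` complex matrices: a group
homomorphism into the unitary matrices with `tr(ρ(g)† ρ(h)) = 0` for all `g ≠ h`,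
where `tr` is the normalized trace `Tr(M)/d`. -/
def IsQuasiRegular (G : Type*) [Group G] (d : ℕ)
    (ρ : G → Matrix (Fin d) (Fin d) ℂ) : Prop :=
  (ρ 1 = 1) ∧
  (∀ g h : G, ρ (g * h) = ρ g * ρ h) ∧
  (∀ g : G, (ρ g).conjTranspose * ρ g = 1 ∧ ρ g * (ρ g).conjTranspose = 1) ∧
  (∀ g h : G, g ≠ h → Matrix.trace ((ρ g).conjTranspose * ρ h) / (d : ℂ) = 0)

/-- If `ρ` is a quasi-regular representation of `G` and `U` is a
`(G,G')`-transformation matrix, then `ρ'(b) := ∑_{a ∈ G} U_{a,b} ρ(a)` is a quasi-regular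
representation of `G'`. -/
theorem stmt11 {G G' : Type*} [Group G] [Group G'] [Fintype G] [Fintype G']
    [DecidableEq G] [DecidableEq G'] (d : ℕ)
    (ρ : G → Matrix (Fin d) (Fin d) ℂ) (hρ : IsQuasiRegular G d ρ)
    (U : Matrix G G' ℂ) (hU : IsTransMat U) :
    IsQuasiRegular G' d (fun b => ∑ a : G, U a b • ρ a) := by
  obtain ⟨⟨hUU, hUU'⟩, hstar, hconv⟩ := hU
  obtain ⟨h1, hmul, huni, htr⟩ := hρ
  have hrow : ∀ a b : G, ∑ x : G', U a x * star (U b x) = if a = b then 1 else 0 := by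
    intro a b
    have := congrFun (congrFun hUU a) b
    simpa [Matrix.mul_apply, Matrix.conjTranspose_apply, Matrix.one_apply] using this
  have hcol : ∀ x y : G', ∑ a : G, star (U a x) * U a y = if x = y then 1 else 0 := by
    intro x y
    have := congrFun (congrFun hUU' x) y
    simpa [Matrix.mul_apply, Matrix.conjTranspose_apply, Matrix.one_apply] using this
  have key : ∀ (x y : G') (c : G), ∑ a : G, U a x * U (a⁻¹ * c) y = U c (x * y) := by
    intro x y c
    calc ∑ a : G, U a x * U (a⁻¹ * c) y
        = ∑ b : G, U b⁻¹ x * U (b * c) y := by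
          refine Fintype.sum_equiv (Equiv.inv G) _ _ ?_
          intro a; simp [Equiv.inv]
      _ = ∑ b : G, ∑ s : G', ∑ t : G', (if s * t = y then star (U b x⁻¹) * U b s * U c t else 0) := by
          refine Finset.sum_congr rfl fun b _ => ?_
          rw [hstar b x⁻¹, inv_inv, hconv b c y, Finset.mul_sum]
          refine Finset.sum_congr rfl fun s _ => ?_
          rw [Finset.mul_sum]
          refine Finset.sum_congr rfl fun t _ => ?_
          split_ifs <;> ring
      _ = ∑ s : G', ∑ t : G', (if s * t = y then (∑ b : G, star (U b x⁻¹) * U b s) * U c t else 0) := by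
          rw [Finset.sum_comm]
          refine Finset.sum_congr rfl fun s _ => ?_
          rw [Finset.sum_comm]
          refine Finset.sum_congr rfl fun t _ => ?_
          split_ifs
          · rw [Finset.sum_mul]
          · simp
      _ = U c (x * y) := by
          simp only [hcol]
          simp only [← eq_inv_mul_iff_mul_eq, Finset.sum_ite_eq', Finset.mem_univ, if_true]
          simp only [ite_mul, one_mul, zero_mul, Finset.sum_ite_eq, Finset.mem_univ, if_true]
          rw [inv_inv]
  have hcol1 : ∀ a : G, U a 1 = if a = 1 then 1 else 0 := by
    intro a
    have h := hconv a 1 1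
    rw [mul_one] at h
    rw [h]
    simp only [mul_eq_one_iff_inv_eq, Finset.sum_ite_eq, Finset.mem_univ, if_true]
    rw [← hrow a 1]
    refine Finset.sum_congr rfl fun x _ => ?_
    congr 1
    rw [hstar 1 x, inv_one]
  have hrow1 : ∀ z : G', U 1 z = if z = 1 then 1 else 0 := by
    intro z
    have hk := key z 1 1
    rw [mul_one] at hk
    rw [← hk]
    have he : ∀ a : G, U a z * U (a⁻¹ * 1) 1 = star (U a 1) * U a z := by
      intro a
      rw [mul_one, hstar a 1, inv_one, mul_comm]
    rw [Finset.sum_congr rfl fun a _ => he a, hcol 1 z]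
    simp [eq_comm]
  -- main parts
  have hone : (∑ a : G, U a (1 : G') • ρ a) = 1 := by
    simp only [hcol1, ite_smul, one_smul, zero_smul, Finset.sum_ite_eq', Finset.mem_univ,
      if_true, h1]
  have hmul' : ∀ g h : G', (∑ a : G, U a (g * h) • ρ a)
      = (∑ a : G, U a g • ρ a) * (∑ a : G, U a h • ρ a) := by
    intro g h
    rw [Finset.sum_mul]
    simp only [Finset.mul_sum, smul_mul_assoc, mul_smul_comm, smul_smul, ← hmul]
    calc ∑ c : G, U c (g * h) • ρ c
        = ∑ c : G, (∑ a : G, U a g * U (a⁻¹ * c) h) • ρ c := by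
          refine Finset.sum_congr rfl fun c _ => ?_
          rw [key g h c]
      _ = ∑ c : G, ∑ a : G, (U a g * U (a⁻¹ * c) h) • ρ c := by
          refine Finset.sum_congr rfl fun c _ => ?_
          rw [Finset.sum_smul]
      _ = ∑ a : G, ∑ c : G, (U a g * U (a⁻¹ * c) h) • ρ c := Finset.sum_comm
      _ = ∑ a : G, ∑ b : G, (U a g * U b h) • ρ (a * b) := by
          refine Finset.sum_congr rfl fun a _ => ?_
          refine (Fintype.sum_equiv (Equiv.mulLeft a) _ _ ?_).symm
          intro b; simp
      _ = ∑ a : G, ∑ b : G, (U b h * U a g) • ρ (a * b) := by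
          refine Finset.sum_congr rfl fun a _ => Finset.sum_congr rfl fun b _ => ?_
          rw [mul_comm (U a g)]
  have hadjρ : ∀ a : G, (ρ a).conjTranspose = ρ a⁻¹ := by
    intro a
    have h2 : ρ a * ρ a⁻¹ = 1 := by rw [← hmul]; simp [h1]
    calc (ρ a).conjTranspose = (ρ a).conjTranspose * (ρ a * ρ a⁻¹) := by rw [h2, mul_one]
      _ = ((ρ a).conjTranspose * ρ a) * ρ a⁻¹ := by rw [mul_assoc]
      _ = ρ a⁻¹ := by rw [(huni a).1, one_mul]
  have hadj : ∀ g : G', (∑ a : G, U a g • ρ a).conjTranspose = ∑ a : G, U a g⁻¹ • ρ a := by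
    intro g
    rw [Matrix.conjTranspose_sum]
    calc ∑ a : G, (U a g • ρ a).conjTranspose
        = ∑ a : G, U a⁻¹ g⁻¹ • ρ a⁻¹ := by
          refine Finset.sum_congr rfl fun a _ => ?_
          rw [Matrix.conjTranspose_smul, hstar, hadjρ]
      _ = ∑ a : G, U a g⁻¹ • ρ a := by
          refine Fintype.sum_equiv (Equiv.inv G) _ _ ?_
          intro a; simp [Equiv.inv]
  refine ⟨hone, fun g h => hmul' g h, fun g => ?_, fun g h hgh => ?_⟩
  · constructor
    · show (∑ a : G, U a g • ρ a).conjTranspose * (∑ a : G, U a g • ρ a) = 1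
      rw [hadj, ← hmul', inv_mul_cancel, hone]
    · show (∑ a : G, U a g • ρ a) * (∑ a : G, U a g • ρ a).conjTranspose = 1
      rw [hadj, ← hmul', mul_inv_cancel, hone]
  · show Matrix.trace ((∑ a : G, U a g • ρ a).conjTranspose * (∑ a : G, U a h • ρ a)) / (d : ℂ) = 0
    rw [hadj, ← hmul', Matrix.trace_sum, Finset.sum_div]
    refine Finset.sum_eq_zero fun c _ => ?_
    rw [Matrix.trace_smul, smul_eq_mul]
    by_cases hc : c = 1
    · subst hc
      rw [hrow1, if_neg, zero_mul, zero_div]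
      intro hz
      exact hgh (by rwa [inv_mul_eq_one] at hz)
    · have ht : Matrix.trace (ρ c) / (d : ℂ) = 0 := by
        have := htr 1 c (Ne.symm hc)
        rwa [h1, Matrix.conjTranspose_one, one_mul] at this
      rw [mul_div_assoc, ht, mul_zero]
end

section
/- Let G and G' be finite groups of equal order with left regular representations λ and λ' respectively. A unitary matrix U ∈ ℂ^{G×G'} is a (G,G')-transformation matrix if and only if U·λ'(b)·U† = ∑_{a∈G} U_{a,b}·λ(a) for all b ∈ G'. -/
open scoped BigOperators Classical

/-- The left regular representation of `G`: `λ(g)_{x,y} = 1` iff `x = g y`. -/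
noncomputable def leftReg (G : Type*) [Group G] : G → Matrix G G ℂ :=
  fun g => Matrix.of fun x y => if x = g * y then 1 else 0

/-- A unitary matrix `U ∈ ℂ^{G×G'}` is a `(G,G')`-transformation matrix
iff `U λ'(b) U† = ∑_{a ∈ G} U_{a,b} λ(a)` for all `b ∈ G'`. -/
theorem stmt12 {G G' : Type*} [Group G] [Group G'] [Fintype G] [Fintype G']
    [DecidableEq G] [DecidableEq G']
    (hcard : Fintype.card G = Fintype.card G')
    (U : Matrix G G' ℂ)
    (hunitary : U * U.conjTranspose = 1 ∧ U.conjTranspose * U = 1) :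
    IsTransMat U ↔
      ∀ b : G', U * leftReg G' b * U.conjTranspose = ∑ a : G, U a b • leftReg G a := by
  classical
  have entry_lhs : ∀ (b : G') (a c : G),
      (U * leftReg G' b * U.conjTranspose) a c = ∑ y : G', U a (b * y) * star (U c y) := by
    intro b a c
    rw [Matrix.mul_apply]
    refine Finset.sum_congr rfl fun y _ => ?_
    rw [Matrix.mul_apply, Matrix.conjTranspose_apply]
    congr 1
    simp [leftReg, mul_ite]
  have entry_rhs : ∀ (b : G') (a c : G),
      (∑ g : G, U g b • leftReg G g) a c = U (a * c⁻¹) b := by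
    intro b a c
    simp only [Matrix.sum_apply, Matrix.smul_apply, leftReg, Matrix.of_apply, smul_eq_mul,
      mul_ite, mul_one, mul_zero]
    have : ∀ g : G, (if a = g * c then U g b else 0) = if a * c⁻¹ = g then U g b else 0 := by
      intro g
      congr 1
      simp [mul_inv_eq_iff_eq_mul]
    rw [Finset.sum_congr rfl fun g _ => this g]
    simp [Finset.sum_ite_eq]
  have main : (∀ b : G', U * leftReg G' b * U.conjTranspose = ∑ a : G, U a b • leftReg G a) ↔
      ∀ (b : G') (a c : G), ∑ y : G', U a (b * y) * star (U c y) = U (a * c⁻¹) b := by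
    constructor
    · intro h b a c
      rw [← entry_lhs, ← entry_rhs, h b]
    · intro h b
      ext a c
      rw [entry_lhs, entry_rhs, h]
  rw [main]
  constructor
  · rintro ⟨-, hstar, hmul⟩ b a c
    rw [hmul a c⁻¹ b]
    rw [Finset.sum_comm]
    have inner : ∀ y : G',
        (∑ x : G', if x * y = b then U a x * U c⁻¹ y else 0) = U a (b * y⁻¹) * U c⁻¹ y := by
      intro y
      have : ∀ x : G', (if x * y = b then U a x * U c⁻¹ y else 0)
          = if x = b * y⁻¹ then U a x * U c⁻¹ y else 0 := by
        intro x
        congr 1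
        apply propext
        constructor
        · rintro rfl; group
        · rintro rfl; group
      rw [Finset.sum_congr rfl fun x _ => this x]
      simp [Finset.sum_ite_eq']
    rw [Finset.sum_congr rfl fun y _ => inner y]
    rw [← Equiv.sum_comp (Equiv.inv G') (fun y => U a (b * y⁻¹) * U c⁻¹ y)]
    refine Finset.sum_congr rfl fun y _ => ?_
    simp only [Equiv.inv_apply, inv_inv]
    rw [hstar c y]
  · intro h
    have col1 : ∀ g : G, U g 1 = if g = 1 then 1 else 0 := by
      intro g
      have := h 1 g 1
      simp only [one_mul, inv_one, mul_one] at this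
      have h2 : (U * U.conjTranspose) g 1 = U g 1 := by
        rw [Matrix.mul_apply]
        refine (Finset.sum_congr rfl fun y _ => ?_).trans this
        rw [Matrix.conjTranspose_apply]
      rw [hunitary.1] at h2
      rw [← h2, Matrix.one_apply]
    have row1 : ∀ x : G', U 1 x = if x = 1 then 1 else 0 := by
      intro x
      have h2 : (U.conjTranspose * U) 1 x = U 1 x := by
        rw [Matrix.mul_apply]
        have : ∀ g : G, U.conjTranspose 1 g * U g x
            = if g = 1 then U g x else 0 := by
          intro g
          rw [Matrix.conjTranspose_apply, col1 g]
          split <;> simp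
        rw [Finset.sum_congr rfl fun g _ => this g]
        simp [Finset.sum_ite_eq']
      rw [hunitary.2] at h2
      rw [← h2, Matrix.one_apply]
      simp [eq_comm]
    have hstar : ∀ (a : G) (b : G'), star (U a b) = U a⁻¹ b⁻¹ := by
      intro a b
      have := h b⁻¹ 1 a
      have hl : (∑ y : G', U 1 (b⁻¹ * y) * star (U a y)) = star (U a b) := by
        have : ∀ y : G', U 1 (b⁻¹ * y) * star (U a y)
            = if y = b then star (U a y) else 0 := by
          intro y
          rw [row1]
          by_cases hy : y = b
          · subst hy; simp
          · have hb : ¬ (b⁻¹ * y = 1) := by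
              simpa [inv_mul_eq_one, eq_comm] using hy
            simp [hy, hb]
        rw [Finset.sum_congr rfl fun y _ => this y]
        simp [Finset.sum_ite_eq']
      rw [hl, one_mul] at this
      exact this
    refine ⟨hunitary, hstar, ?_⟩
    intro a b c
    have := h c a b⁻¹
    rw [inv_inv] at this
    rw [← this]
    have inner : ∀ x : G',
        (∑ y : G', if x * y = c then U a x * U b y else 0) = U a x * U b (x⁻¹ * c) := by
      intro x
      have : ∀ y : G', (if x * y = c then U a x * U b y else 0)
          = if y = x⁻¹ * c then U a x * U b y else 0 := by
        intro y
        congr 1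
        apply propext
        constructor
        · rintro rfl; group
        · rintro rfl; group
      rw [Finset.sum_congr rfl fun y _ => this y]
      simp [Finset.sum_ite_eq']
    rw [Finset.sum_congr rfl fun x _ => inner x]
    rw [← Equiv.sum_comp (Equiv.mulLeft c) (fun x => U a x * U b (x⁻¹ * c))]
    refine Finset.sum_congr rfl fun y _ => ?_
    have hy : ((Equiv.mulLeft c) y)⁻¹ * c = y⁻¹ := by
      simp [Equiv.coe_mulLeft, mul_inv_rev, mul_assoc]
    rw [hy]
    simp only [Equiv.coe_mulLeft]
    rw [hstar b⁻¹ y, inv_inv]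
end

section
/- Let G and G' be finite groups of equal order with left regular representations λ and λ'. A matrix U ∈ ℂ^{G×G'} is a (G,G')-transformation matrix if and only if the linear map Ψ_U : Λ_{G'} → Λ_G determined by Ψ_U(λ'(b)) = ∑_{a∈G} U_{a,b}·λ(a) for all b ∈ G' is a unitary isomorphism (i.e., a bijective algebra isomorphism preserving the normalized trace and commuting with conjugate transpose). Moreover, every unitary isomorphism from Λ_{G'} to Λ_G equals Ψ_U for some (G,G')-transformation matrix U. -/
open scoped BigOperators Classical

/-- The group algebra `Λ_G = span{λ(g) : g ∈ G}` inside the `|G| × |G|` complex matrices. -/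
noncomputable def lamAlg (G : Type*) [Group G] : Submodule ℂ (Matrix G G ℂ) :=
  Submodule.span ℂ (Set.range (leftReg G))

/-- A unitary isomorphism from `Λ_{G'}` to `Λ_G`: a bijective algebra isomorphism that
preserves the normalized trace and commutes with conjugate transpose (here given as a
function on the ambient matrix space whose behaviour is constrained on `Λ_{G'}`). -/
def IsUnitaryIso {G G' : Type*} [Group G] [Group G'] [Fintype G] [Fintype G']
    (Φ : Matrix G' G' ℂ → Matrix G G ℂ) : Prop :=
  (∀ M ∈ lamAlg G', ∀ N ∈ lamAlg G', Φ (M + N) = Φ M + Φ N) ∧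
  (∀ (c : ℂ), ∀ M ∈ lamAlg G', Φ (c • M) = c • Φ M) ∧
  Set.BijOn Φ (lamAlg G' : Set (Matrix G' G' ℂ)) (lamAlg G : Set (Matrix G G ℂ)) ∧
  (∀ M ∈ lamAlg G', ∀ N ∈ lamAlg G', Φ (M * N) = Φ M * Φ N) ∧
  Φ 1 = 1 ∧
  (∀ M ∈ lamAlg G',
    Matrix.trace (Φ M) / (Fintype.card G : ℂ) = Matrix.trace M / (Fintype.card G' : ℂ)) ∧
  (∀ M ∈ lamAlg G', Φ M.conjTranspose = (Φ M).conjTranspose)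


section Sm
variable {G : Type*} [Group G] [Fintype G]

noncomputable def Sm (c : G → ℂ) : Matrix G G ℂ := ∑ g, c g • leftReg G g

lemma Sm_apply (c : G → ℂ) (x y : G) : Sm c x y = c (x * y⁻¹) := by
  classical
  simp only [Sm, Matrix.sum_apply, Matrix.smul_apply, leftReg, Matrix.of_apply, smul_eq_mul,
    mul_ite, mul_one, mul_zero]
  rw [Finset.sum_congr rfl (fun g _ => ?_), Finset.sum_ite_eq' Finset.univ (x * y⁻¹) c,
    if_pos (Finset.mem_univ _)]
  congr 1
  · simp [eq_comm, eq_mul_inv_iff_mul_eq]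

lemma Sm_coord (c : G → ℂ) (g : G) : Sm c g 1 = c g := by simp [Sm_apply]

lemma Sm_inj {c d : G → ℂ} (h : Sm c = Sm d) : c = d :=
  funext fun g => by simpa [Sm_coord] using congrFun (congrFun h g) 1

lemma leftReg_eq_Sm (g : G) : leftReg G g = Sm (fun a => if a = g then 1 else 0) := by
  ext x y
  rw [Sm_apply]
  by_cases h : x = g * y
  · simp [leftReg, h, mul_inv_eq_iff_eq_mul]
  · have h2 : x * y⁻¹ ≠ g := fun hg => h (by rw [← hg]; group)
    simp [leftReg, h, h2]

lemma Sm_mem (c : G → ℂ) : Sm c ∈ lamAlg G :=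
  Submodule.sum_mem _ fun g _ =>
    Submodule.smul_mem _ _ (Submodule.subset_span ⟨g, rfl⟩)

lemma mem_lamAlg_iff {M : Matrix G G ℂ} : M ∈ lamAlg G ↔ ∃ c : G → ℂ, M = Sm c := by
  constructor
  · intro hM
    induction hM using Submodule.span_induction with
    | mem x hx =>
      obtain ⟨g, rfl⟩ := hx
      exact ⟨_, leftReg_eq_Sm g⟩
    | zero => exact ⟨0, by ext x y; simp [Sm_apply]⟩
    | add x y _ _ hx hy =>
      obtain ⟨c, rfl⟩ := hx; obtain ⟨d, rfl⟩ := hy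
      exact ⟨c + d, by ext x y; simp [Sm_apply]⟩
    | smul r x _ hx =>
      obtain ⟨c, rfl⟩ := hx
      exact ⟨r • c, by ext x y; simp [Sm_apply]⟩
  · rintro ⟨c, rfl⟩; exact Sm_mem c

lemma Sm_mul (c d : G → ℂ) : Sm c * Sm d = Sm (fun g => ∑ x, c x * d (x⁻¹ * g)) := by
  ext x y
  simp only [Matrix.mul_apply, Sm_apply]
  refine Fintype.sum_equiv ((Equiv.inv G).trans (Equiv.mulLeft x)) _ _ fun z => ?_
  simp only [Equiv.trans_apply, Equiv.inv_apply, Equiv.coe_mulLeft]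
  congr 2
  group

lemma Sm_conjT (c : G → ℂ) : (Sm c).conjTranspose = Sm (fun g => star (c g⁻¹)) := by
  ext x y
  simp only [Matrix.conjTranspose_apply, Sm_apply]
  congr 2
  group

lemma Sm_trace (c : G → ℂ) : (Sm c).trace = (Fintype.card G : ℂ) * c 1 := by
  simp [Matrix.trace, Matrix.diag, Sm_apply, Finset.sum_const, mul_comm]

lemma Sm_one : (1 : Matrix G G ℂ) = Sm (fun g => if g = 1 then 1 else 0) := by
  ext x y
  simp only [Sm_apply, Matrix.one_apply, mul_inv_eq_one]

lemma leftReg_mem (g : G) : leftReg G g ∈ lamAlg G := Submodule.subset_span ⟨g, rfl⟩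

lemma leftReg_mul (g h : G) : leftReg G g * leftReg G h = leftReg G (g * h) := by
  rw [leftReg_eq_Sm, leftReg_eq_Sm, Sm_mul, leftReg_eq_Sm]
  refine congrArg Sm (funext fun a => ?_)
  classical
  simp only [ite_mul, one_mul, zero_mul,
    Finset.sum_ite_eq' Finset.univ g, if_pos (Finset.mem_univ _), inv_mul_eq_iff_eq_mul]

lemma leftReg_conjT (g : G) : (leftReg G g).conjTranspose = leftReg G g⁻¹ := by
  rw [leftReg_eq_Sm, Sm_conjT, leftReg_eq_Sm]
  refine congrArg Sm (funext fun a => ?_)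
  by_cases h : a = g⁻¹ <;> simp [h, inv_eq_iff_eq_inv]

end Sm

section lemC
variable {H K : Type*} [Group H] [Group K] [Fintype H] [Fintype K]
  [DecidableEq H] [DecidableEq K]

lemma lemC (V : Matrix H K ℂ) (h2 : V.conjTranspose * V = 1)
    (hstar : ∀ a b, star (V a b) = V a⁻¹ b⁻¹)
    (h3 : ∀ a b c, V (a * b) c = ∑ x, V a x * V b (x⁻¹ * c)) :
    ∀ (c : H) (x y : K), V c (x * y) = ∑ a, V a x * V (a⁻¹ * c) y := by
  intro c x y
  classical
  have key : ∀ z : K, (∑ b : H, star (V b x⁻¹) * V b z) = if z = x⁻¹ then 1 else 0 := by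
    intro z
    have := congrFun (congrFun h2 x⁻¹) z
    simp only [Matrix.mul_apply, Matrix.conjTranspose_apply, Matrix.one_apply] at this
    rw [this]
    by_cases h : z = x⁻¹ <;> simp [h, eq_comm]
  symm
  calc ∑ a, V a x * V (a⁻¹ * c) y
      = ∑ b : H, star (V b x⁻¹) * V (b * c) y := by
        refine Fintype.sum_equiv (Equiv.inv H) _ _ fun a => ?_
        simp only [Equiv.inv_apply]
        rw [hstar]
        simp
    _ = ∑ b : H, ∑ z : K, star (V b x⁻¹) * (V b z * V c (z⁻¹ * y)) := by
        refine Finset.sum_congr rfl fun b _ => ?_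
        rw [h3, Finset.mul_sum]
    _ = ∑ z : K, (∑ b : H, star (V b x⁻¹) * V b z) * V c (z⁻¹ * y) := by
        rw [Finset.sum_comm]
        refine Finset.sum_congr rfl fun z _ => ?_
        rw [Finset.sum_mul]
        exact Finset.sum_congr rfl fun b _ => by ring
    _ = V c (x * y) := by
        simp only [key, ite_mul, one_mul, zero_mul,
          Finset.sum_ite_eq' Finset.univ (x⁻¹), if_pos (Finset.mem_univ _)]
        congr 1
        group
end lemC

section TM
variable {G G' : Type*} [Group G] [Group G'] [Fintype G] [Fintype G']
  [DecidableEq G] [DecidableEq G']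

-- simplify the (3) condition to single-sum form
lemma cond3_iff (U : Matrix G G' ℂ) :
    (∀ (a b : G) (c : G'),
        U (a * b) c = ∑ x : G', ∑ y : G', if x * y = c then U a x * U b y else 0) ↔
    (∀ (a b : G) (c : G'), U (a * b) c = ∑ x : G', U a x * U b (x⁻¹ * c)) := by
  have h : ∀ (a b : G) (c : G'),
      (∑ x : G', ∑ y : G', if x * y = c then U a x * U b y else 0)
        = ∑ x : G', U a x * U b (x⁻¹ * c) := by
    intro a b c
    refine Finset.sum_congr rfl fun x _ => ?_
    rw [Finset.sum_congr rfl (fun y _ => ?_), Finset.sum_ite_eq' Finset.univ (x⁻¹ * c)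
      (fun y => U a x * U b y), if_pos (Finset.mem_univ _)]
    congr 1
    simp [eq_inv_mul_iff_mul_eq]
  constructor <;> intro H a b c <;> rw [H a b c] <;> [skip; skip] <;> simp [h]
end TM

section Helper

lemma unit_row {ι : Type*} [Fintype ι] [DecidableEq ι] (f : ι → ℂ) (i0 : ι)
    (hsum : ∑ i, f i * star (f i) = 1) (h0 : f i0 = 1) : ∀ i, i ≠ i0 → f i = 0 := by
  have hsumR : ∑ i, Complex.normSq (f i) = 1 := by
    have : ∑ i, ((Complex.normSq (f i) : ℂ)) = 1 := by
      rw [← hsum]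
      exact Finset.sum_congr rfl fun i _ => (Complex.mul_conj (f i)).symm
    exact_mod_cast this
  have herase : ∑ i ∈ Finset.univ.erase i0, Complex.normSq (f i) = 0 := by
    have hsplit := Finset.add_sum_erase Finset.univ (fun i => Complex.normSq (f i))
      (Finset.mem_univ i0)
    simp only [h0, Complex.normSq_one, hsumR] at hsplit
    linarith
  intro i hi
  have := (Finset.sum_eq_zero_iff_of_nonneg
    (fun j _ => Complex.normSq_nonneg (f j))).mp herase i
    (Finset.mem_erase.mpr ⟨hi, Finset.mem_univ i⟩)
  exact Complex.normSq_eq_zero.mp this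

end Helper

section Main
variable {G G' : Type*} [Group G] [Group G'] [Fintype G] [Fintype G']
  [DecidableEq G] [DecidableEq G']

noncomputable def Psi (U : Matrix G G' ℂ) (M : Matrix G' G' ℂ) : Matrix G G ℂ :=
  Sm (U.mulVec (fun b => M b 1))

lemma Psi_Sm (U : Matrix G G' ℂ) (c : G' → ℂ) : Psi U (Sm c) = Sm (U.mulVec c) := by
  unfold Psi
  rw [show (fun b => Sm c b 1) = c from funext fun b => Sm_coord c b]

lemma transMat_delta (U : Matrix G G' ℂ) (hU : IsTransMat U) :
    U 1 1 = 1 ∧ (∀ b : G', b ≠ 1 → U 1 b = 0) ∧ (∀ a : G, a ≠ 1 → U a 1 = 0) := by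
  obtain ⟨⟨h1a, h1b⟩, h2, h3⟩ := hU
  have h3' := (cond3_iff U).mp h3
  have hrowsum : ∑ b : G', U 1 b * star (U 1 b) = 1 := by
    have h1 := congrFun (congrFun h1a 1) 1
    simpa [Matrix.mul_apply, Matrix.conjTranspose_apply, Matrix.one_apply_eq] using h1
  have hU11 : U 1 1 = 1 := by
    have h := h3' 1 1 1
    simp only [one_mul, mul_one] at h
    rw [h, ← hrowsum]
    refine Finset.sum_congr rfl fun x _ => ?_
    congr 1
    rw [h2]
    simp
  have hrow : ∀ b : G', b ≠ 1 → U 1 b = 0 :=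
    fun b hb => unit_row (fun b => U 1 b) 1 hrowsum hU11 b hb
  have hcolsum : ∑ a : G, U a 1 * star (U a 1) = 1 := by
    have h1 := congrFun (congrFun h1b 1) 1
    simp only [Matrix.mul_apply, Matrix.conjTranspose_apply, Matrix.one_apply_eq] at h1
    rw [← h1]
    exact Finset.sum_congr rfl fun a _ => mul_comm _ _
  have hcol : ∀ a : G, a ≠ 1 → U a 1 = 0 :=
    fun a ha => unit_row (fun a => U a 1) 1 hcolsum hU11 a ha
  exact ⟨hU11, hrow, hcol⟩

lemma psi_unitaryIso (U : Matrix G G' ℂ) (hU : IsTransMat U) :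
    IsUnitaryIso (Psi U) ∧ ∀ b : G', Psi U (leftReg G' b) = ∑ a : G, U a b • leftReg G a := by
  obtain ⟨hU11, hrow0, hcol0⟩ := transMat_delta U hU
  obtain ⟨⟨h1a, h1b⟩, h2, h3⟩ := hU
  have hconv := lemC U h1b h2 ((cond3_iff U).mp h3)
  have hGne : (Fintype.card G : ℂ) ≠ 0 := Nat.cast_ne_zero.mpr Fintype.card_ne_zero
  have hGne' : (Fintype.card G' : ℂ) ≠ 0 := Nat.cast_ne_zero.mpr Fintype.card_ne_zero
  refine ⟨⟨?_, ?_, ⟨?_, ?_, ?_⟩, ?_, ?_, ?_, ?_⟩, ?_⟩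
  · -- additivity
    intro M _ N _
    unfold Psi
    ext x y
    simp only [Sm_apply, Matrix.mulVec, dotProduct, Matrix.add_apply,
      ← Finset.sum_add_distrib]
    exact Finset.sum_congr rfl fun b _ => by ring
  · -- smul
    intro c M _
    unfold Psi
    ext x y
    simp only [Sm_apply, Matrix.mulVec, dotProduct, Matrix.smul_apply, smul_eq_mul,
      Finset.mul_sum]
    exact Finset.sum_congr rfl fun b _ => by ring
  · -- MapsTo
    intro M _
    exact Sm_mem _
  · -- InjOn
    intro M hM N hN h
    obtain ⟨c, rfl⟩ := mem_lamAlg_iff.mp hM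
    obtain ⟨d, rfl⟩ := mem_lamAlg_iff.mp hN
    rw [Psi_Sm, Psi_Sm] at h
    have hv := Sm_inj h
    have : c = d := by
      have h2' := congrArg (Matrix.mulVec U.conjTranspose) hv
      rwa [Matrix.mulVec_mulVec, Matrix.mulVec_mulVec, h1b, Matrix.one_mulVec,
        Matrix.one_mulVec] at h2'
    rw [this]
  · -- SurjOn
    intro N hN
    obtain ⟨w, rfl⟩ := mem_lamAlg_iff.mp hN
    refine ⟨Sm (Matrix.mulVec U.conjTranspose w), Sm_mem _, ?_⟩
    rw [Psi_Sm, Matrix.mulVec_mulVec, h1a, Matrix.one_mulVec]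
  · -- multiplicative
    intro M hM N hN
    obtain ⟨c, rfl⟩ := mem_lamAlg_iff.mp hM
    obtain ⟨d, rfl⟩ := mem_lamAlg_iff.mp hN
    rw [Sm_mul, Psi_Sm, Psi_Sm, Psi_Sm, Sm_mul]
    refine congrArg Sm (funext fun g => ?_)
    simp only [Matrix.mulVec, dotProduct]
    calc ∑ b, U g b * ∑ x, c x * d (x⁻¹ * b)
        = ∑ b, ∑ x, U g b * (c x * d (x⁻¹ * b)) := by
          exact Finset.sum_congr rfl fun b _ => Finset.mul_sum _ _ _
      _ = ∑ x, ∑ b, U g b * (c x * d (x⁻¹ * b)) := Finset.sum_comm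
      _ = ∑ x, ∑ y, U g (x * y) * (c x * d y) := by
          refine Finset.sum_congr rfl fun x _ => ?_
          refine Fintype.sum_equiv (Equiv.mulLeft x⁻¹) _ _ fun y => ?_
          simp only [Equiv.coe_mulLeft, mul_inv_cancel_left]
      _ = ∑ x, ∑ y, ∑ a, (U a x * U (a⁻¹ * g) y) * (c x * d y) := by
          refine Finset.sum_congr rfl fun x _ => Finset.sum_congr rfl fun y _ => ?_
          rw [hconv, Finset.sum_mul]
      _ = ∑ x, ∑ a, ∑ y, (U a x * U (a⁻¹ * g) y) * (c x * d y) :=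
          Finset.sum_congr rfl fun x _ => Finset.sum_comm
      _ = ∑ a, ∑ x, ∑ y, (U a x * U (a⁻¹ * g) y) * (c x * d y) := Finset.sum_comm
      _ = ∑ a, (∑ x, U a x * c x) * ∑ y, U (a⁻¹ * g) y * d y := by
          refine Finset.sum_congr rfl fun a _ => ?_
          rw [Finset.sum_mul_sum]
          exact Finset.sum_congr rfl fun x _ => Finset.sum_congr rfl fun y _ => by ring
  · -- Psi 1 = 1
    rw [Sm_one (G := G'), Psi_Sm, Sm_one (G := G)]
    refine congrArg Sm (funext fun a => ?_)
    simp only [Matrix.mulVec, dotProduct, mul_ite, mul_one, mul_zero]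
    rw [Finset.sum_eq_single (1 : G') (fun x _ hx => if_neg hx)
      (fun h => absurd (Finset.mem_univ _) h), if_pos rfl]
    by_cases h : a = 1
    · rw [h, if_pos rfl]; exact hU11
    · rw [if_neg h]; exact hcol0 a h
  · -- trace
    intro M hM
    obtain ⟨c, rfl⟩ := mem_lamAlg_iff.mp hM
    rw [Psi_Sm, Sm_trace, Sm_trace]
    have : Matrix.mulVec U c 1 = c 1 := by
      rw [show Matrix.mulVec U c 1 = ∑ b, U 1 b * c b from rfl,
        Finset.sum_eq_single 1 (fun b _ hb => by rw [hrow0 b hb, zero_mul])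
          (fun h => absurd (Finset.mem_univ _) h), hU11, one_mul]
    rw [this, mul_comm, mul_div_assoc, div_self hGne, mul_one,
      mul_comm, mul_div_assoc, div_self hGne', mul_one]
  · -- conjTranspose
    intro M hM
    obtain ⟨c, rfl⟩ := mem_lamAlg_iff.mp hM
    rw [Sm_conjT, Psi_Sm, Psi_Sm, Sm_conjT]
    refine congrArg Sm (funext fun a => ?_)
    simp only [Matrix.mulVec, dotProduct, star_sum, star_mul']
    refine Fintype.sum_equiv (Equiv.inv G') _ _ fun b => ?_
    simp only [Equiv.inv_apply]
    rw [show star (U a⁻¹ b⁻¹) = U a b from by rw [← h2, star_star]]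
  · -- representation property
    intro b
    rw [leftReg_eq_Sm, Psi_Sm]
    show Sm _ = Sm (fun a => U a b)
    refine congrArg Sm (funext fun a => ?_)
    simp only [Matrix.mulVec, dotProduct, mul_ite, mul_one, mul_zero]
    rw [Finset.sum_eq_single b (fun x _ hx => if_neg hx)
      (fun h => absurd (Finset.mem_univ _) h), if_pos rfl]

lemma transMat_of_iso (hcard : Fintype.card G = Fintype.card G')
    (Φ : Matrix G' G' ℂ → Matrix G G ℂ) (hΦ : IsUnitaryIso Φ) (U : Matrix G G' ℂ)
    (hrep : ∀ b : G', Φ (leftReg G' b) = ∑ a : G, U a b • leftReg G a) :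
    IsTransMat U := by
  obtain ⟨hadd, hsmul, hbij, hmul, hone, htr, hstarc⟩ := hΦ
  have hrep' : ∀ b : G', Φ (leftReg G' b) = Sm (fun a => U a b) := hrep
  have hGne : (Fintype.card G : ℂ) ≠ 0 := Nat.cast_ne_zero.mpr Fintype.card_ne_zero
  have hGne' : (Fintype.card G' : ℂ) ≠ 0 := Nat.cast_ne_zero.mpr Fintype.card_ne_zero
  -- star condition
  have h2 : ∀ (a : G) (b : G'), star (U a b) = U a⁻¹ b⁻¹ := by
    have key : ∀ (b : G') (a : G), U a b⁻¹ = star (U a⁻¹ b) := by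
      intro b a
      have h := hstarc (leftReg G' b) (leftReg_mem b)
      rw [leftReg_conjT, hrep', hrep', Sm_conjT] at h
      exact congrFun (Sm_inj h) a
    intro a b
    rw [key b a⁻¹, inv_inv]
  -- convolution condition (3')
  have hconv : ∀ (c : G) (x y : G'), U c (x * y) = ∑ a : G, U a x * U (a⁻¹ * c) y := by
    intro c x y
    have h := hmul (leftReg G' x) (leftReg_mem x) (leftReg G' y) (leftReg_mem y)
    rw [leftReg_mul, hrep', hrep', hrep', Sm_mul] at h
    exact congrFun (Sm_inj h) c
  -- unitarity
  have h1b : U.conjTranspose * U = 1 := by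
    ext x y
    have hx := hmul (leftReg G' x⁻¹) (leftReg_mem x⁻¹) (leftReg G' y) (leftReg_mem y)
    rw [leftReg_mul] at hx
    have htr' := htr _ (leftReg_mem (x⁻¹ * y))
    rw [hx, hrep', hrep', Sm_mul, Sm_trace] at htr'
    rw [leftReg_eq_Sm, Sm_trace] at htr'
    rw [mul_comm, mul_div_assoc, div_self hGne, mul_one,
      mul_comm, mul_div_assoc, div_self hGne', mul_one] at htr'
    have hform : ∑ a : G, U a x⁻¹ * U (a⁻¹ * 1) y = ∑ a : G, star (U a x) * U a y := by
      refine Fintype.sum_equiv (Equiv.inv G) _ _ fun a => ?_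
      simp only [Equiv.inv_apply, mul_one]
      rw [h2, inv_inv]
    rw [hform] at htr'
    simp only [Matrix.mul_apply, Matrix.conjTranspose_apply, Matrix.one_apply]
    rw [htr']
    by_cases h : x = y
    · simp [h]
    · have : ¬(1 : G') = x⁻¹ * y := fun hh => h (by
        have := hh.symm
        rwa [inv_mul_eq_one] at this)
      simp [h, this]
  have h1a : U * U.conjTranspose = 1 :=
    (Matrix.mul_eq_one_comm_of_equiv (Fintype.equivOfCardEq hcard)).mpr h1b
  -- condition (3)
  have h3single : ∀ (a b : G) (c : G'), U (a * b) c = ∑ x : G', U a x * U b (x⁻¹ * c) := by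
    have hW := lemC U.conjTranspose
      (by rw [Matrix.conjTranspose_conjTranspose]; exact h1a)
      (by
        intro b a
        simp only [Matrix.conjTranspose_apply, star_star]
        rw [← h2 a b, star_star])
      (by
        intro b b' a
        simp only [Matrix.conjTranspose_apply]
        rw [hconv a b b', star_sum]
        exact Finset.sum_congr rfl fun x _ => by rw [star_mul'])
    intro a b c
    have h := congrArg star (hW c a b)
    simpa only [Matrix.conjTranspose_apply, star_star, star_sum, star_mul'] using h
  exact ⟨⟨h1a, h1b⟩, h2, (cond3_iff U).mpr h3single⟩



lemma iso_rep (Φ : Matrix G' G' ℂ → Matrix G G ℂ) (hΦ : IsUnitaryIso Φ) (b : G') :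
    Φ (leftReg G' b) = Sm (fun a => Φ (leftReg G' b) a 1) := by
  obtain ⟨c, hc⟩ := mem_lamAlg_iff.mp (hΦ.2.2.1.mapsTo (leftReg_mem b))
  rw [hc]
  refine congrArg Sm (funext fun a => ?_)
  rw [Sm_coord]

theorem stmt13' (hcard : Fintype.card G = Fintype.card G') :
    (∀ U : Matrix G G' ℂ,
      IsTransMat U ↔
        ∃ Φ : Matrix G' G' ℂ → Matrix G G ℂ, IsUnitaryIso Φ ∧
          ∀ b : G', Φ (leftReg G' b) = ∑ a : G, U a b • leftReg G a) ∧
    (∀ Φ : Matrix G' G' ℂ → Matrix G G ℂ, IsUnitaryIso Φ →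
      ∃ U : Matrix G G' ℂ, IsTransMat U ∧
        ∀ b : G', Φ (leftReg G' b) = ∑ a : G, U a b • leftReg G a) := by
  constructor
  · intro U
    constructor
    · intro hU
      obtain ⟨hiso, hrep⟩ := psi_unitaryIso U hU
      exact ⟨Psi U, hiso, hrep⟩
    · rintro ⟨Φ, hΦ, hrep⟩
      exact transMat_of_iso hcard Φ hΦ U hrep
  · intro Φ hΦ
    refine ⟨fun a b => Φ (leftReg G' b) a 1, ?_, ?_⟩
    · exact transMat_of_iso hcard Φ hΦ _ (fun b => iso_rep Φ hΦ b)
    · exact fun b => iso_rep Φ hΦ b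

end Main

/-- `U` is a `(G,G')`-transformation matrix iff the linear map
`Ψ_U : Λ_{G'} → Λ_G` determined by `Ψ_U(λ'(b)) = ∑_a U_{a,b} λ(a)` is a unitary isomorphism;
moreover every unitary isomorphism from `Λ_{G'}` to `Λ_G` arises this way. -/
theorem stmt13 {G G' : Type*} [Group G] [Group G'] [Fintype G] [Fintype G']
    [DecidableEq G] [DecidableEq G']
    (hcard : Fintype.card G = Fintype.card G') :
    (∀ U : Matrix G G' ℂ,
      IsTransMat U ↔
        ∃ Φ : Matrix G' G' ℂ → Matrix G G ℂ, IsUnitaryIso Φ ∧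
          ∀ b : G', Φ (leftReg G' b) = ∑ a : G, U a b • leftReg G a) ∧
    (∀ Φ : Matrix G' G' ℂ → Matrix G G ℂ, IsUnitaryIso Φ →
      ∃ U : Matrix G G' ℂ, IsTransMat U ∧
        ∀ b : G', Φ (leftReg G' b) = ∑ a : G, U a b • leftReg G a) := stmt13' hcard
end

section
/- Let G and G' be finite groups of equal order. A matrix U ∈ ℂ^{G×G'} is a (G,G')-transformation matrix if and only if U is unitary, U·Λ_{G'}·U† = Λ_G, and U·e_e = e_e, where e_e denotes the standard basis vector indexed by the identity element. -/
open scoped BigOperators Classical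

section Aux

set_option linter.unusedSectionVars false

variable {G G' : Type*} [Group G] [Group G'] [Fintype G] [Fintype G']
    [DecidableEq G] [DecidableEq G']

private lemma conj_entry (U : Matrix G G' ℂ) (c : G') (a b : G) :
    (U * leftReg G' c * U.conjTranspose) a b = ∑ y, U a (c*y) * star (U b y) := by
  rw [Matrix.mul_apply]
  refine Finset.sum_congr rfl fun y _ => ?_
  rw [Matrix.mul_apply, Matrix.conjTranspose_apply]
  congr 1
  simp [leftReg, mul_ite]

private lemma sum_reindex (U : Matrix G G' ℂ) (a b : G) (c : G') :
    ∑ y, U a (c*y) * U b y⁻¹ = ∑ x : G', ∑ y : G', if x * y = c then U a x * U b y else 0 := by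
  rw [Finset.sum_comm]
  have h1 : ∀ y : G', (∑ x : G', if x * y = c then U a x * U b y else 0)
      = U a (c * y⁻¹) * U b y := by
    intro y
    have : ∀ x : G', (if x * y = c then U a x * U b y else 0)
        = (if x = c * y⁻¹ then U a x * U b y else 0) := by
      intro x
      congr 1
      simp [eq_mul_inv_iff_mul_eq]
    simp_rw [this]
    simp
  simp_rw [h1]
  exact (Fintype.sum_equiv (Equiv.inv G') _ _ (fun y => by simp)).symm

private lemma circ_of_mem {M : Matrix G G ℂ} (hM : M ∈ lamAlg G) (a b : G) :
    M a b = M (a * b⁻¹) 1 := by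
  induction hM using Submodule.span_induction with
  | mem x hx =>
      obtain ⟨g, rfl⟩ := hx
      simp only [leftReg, Matrix.of_apply]
      congr 1
      simp [mul_inv_eq_iff_eq_mul]
  | zero => simp
  | add x y _ _ hx hy => simp [hx, hy]
  | smul r x _ hx => simp [hx]

end Aux

/-- `U ∈ ℂ^{G×G'}` is a `(G,G')`-transformation matrix iff `U` is unitary,
`U Λ_{G'} U† = Λ_G`, and `U e_e = e_e`. -/
theorem stmt14 {G G' : Type*} [Group G] [Group G'] [Fintype G] [Fintype G']
    [DecidableEq G] [DecidableEq G']
    (hcard : Fintype.card G = Fintype.card G')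
    (U : Matrix G G' ℂ) :
    IsTransMat U ↔
      ((U * U.conjTranspose = 1 ∧ U.conjTranspose * U = 1) ∧
        ((fun M : Matrix G' G' ℂ => U * M * U.conjTranspose) ''
            (lamAlg G' : Set (Matrix G' G' ℂ)) = (lamAlg G : Set (Matrix G G ℂ))) ∧
        U.mulVec (fun y : G' => if y = (1 : G') then (1 : ℂ) else 0) =
          (fun x : G => if x = (1 : G) then (1 : ℂ) else 0)) := by
  constructor
  · rintro ⟨h1, h2, h3⟩
    have key : ∀ (a b : G) (c : G'), (∑ y, U a (c*y) * star (U b y)) = U (a*b⁻¹) c := by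
      intro a b c
      have hs : ∀ y : G', star (U b y) = U b⁻¹ y⁻¹ := fun y => h2 b y
      simp_rw [hs]
      rw [sum_reindex, ← h3]
    have lemA : ∀ c : G', U * leftReg G' c * U.conjTranspose = ∑ g : G, U g c • leftReg G g := by
      intro c
      ext a b
      rw [conj_entry, key, Matrix.sum_apply]
      simp only [Matrix.smul_apply, leftReg, Matrix.of_apply, smul_eq_mul, mul_ite, mul_one,
        mul_zero]
      rw [Finset.sum_eq_single_of_mem (a*b⁻¹) (Finset.mem_univ _)]
      · rw [if_pos (by group)]
      · intro g _ hg
        rw [if_neg]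
        intro h
        exact hg (by simp [h])
    have lemB : ∀ g : G, leftReg G g
        = ∑ c : G', star (U g c) • (U * leftReg G' c * U.conjTranspose) := by
      intro g
      ext a b
      rw [Matrix.sum_apply]
      simp only [Matrix.smul_apply, smul_eq_mul]
      have he : ∀ c : G', (U * leftReg G' c * U.conjTranspose) a b = U (a*b⁻¹) c :=
        fun c => by rw [conj_entry, key]
      simp_rw [he]
      have h4 : (U * U.conjTranspose) (a*b⁻¹) g = (1 : Matrix G G ℂ) (a*b⁻¹) g := by rw [h1.1]
      rw [Matrix.mul_apply] at h4
      simp only [Matrix.conjTranspose_apply] at h4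
      symm
      calc ∑ c, star (U g c) * U (a*b⁻¹) c
          = ∑ c, U (a*b⁻¹) c * star (U g c) := by simp [mul_comm]
        _ = (1 : Matrix G G ℂ) (a*b⁻¹) g := h4
        _ = leftReg G g a b := by
            rw [Matrix.one_apply]
            simp [leftReg, mul_inv_eq_iff_eq_mul]
    refine ⟨h1, ?_, ?_⟩
    · let f : Matrix G' G' ℂ →ₗ[ℂ] Matrix G G ℂ :=
        { toFun := fun M => U * M * U.conjTranspose
          map_add' := fun M N => by simp [Matrix.mul_add, Matrix.add_mul]
          map_smul' := fun r M => by simp [Matrix.mul_smul, Matrix.smul_mul] }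
      have hset : (fun M : Matrix G' G' ℂ => U * M * U.conjTranspose) '' (lamAlg G' : Set _)
          = (Submodule.map f (lamAlg G') : Set _) := (Submodule.map_coe f _).symm
      rw [hset]
      suffices h : Submodule.map f (lamAlg G') = lamAlg G by rw [h]
      rw [lamAlg, Submodule.map_span]
      apply le_antisymm
      · rw [Submodule.span_le]
        rintro _ ⟨_, ⟨c, rfl⟩, rfl⟩
        rw [show f (leftReg G' c) = ∑ g : G, U g c • leftReg G g from lemA c]
        exact Submodule.sum_mem _ fun g _ =>
          Submodule.smul_mem _ _ (Submodule.subset_span ⟨g, rfl⟩)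
      · rw [lamAlg, Submodule.span_le]
        rintro _ ⟨g, rfl⟩
        rw [show leftReg G g = ∑ c : G', star (U g c) • f (leftReg G' c) from lemB g]
        exact Submodule.sum_mem _ fun c _ =>
          Submodule.smul_mem _ _ (Submodule.subset_span ⟨_, ⟨c, rfl⟩, rfl⟩)
    · have col : ∀ a : G, U a (1:G') = if a = 1 then (1:ℂ) else 0 := by
        intro a
        have hk := key a 1 1
        simp only [one_mul, inv_one, mul_one] at hk
        have h4 : (U * U.conjTranspose) a 1 = (1 : Matrix G G ℂ) a 1 := by rw [h1.1]
        rw [Matrix.mul_apply] at h4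
        simp only [Matrix.conjTranspose_apply] at h4
        rw [← hk, h4, Matrix.one_apply]
      funext a
      simp [Matrix.mulVec, dotProduct, mul_ite, col a]
  · rintro ⟨h1, himg, hvec⟩
    have colB : ∀ a : G, U a (1:G') = if a = 1 then (1:ℂ) else 0 := by
      intro a
      have hv := congrFun hvec a
      simpa [Matrix.mulVec, dotProduct, mul_ite] using hv
    have rowB : ∀ b : G', U (1:G) b = if b = 1 then (1:ℂ) else 0 := by
      intro b
      have h4 : (U.conjTranspose * U) b 1 = (1 : Matrix G' G' ℂ) b 1 := by rw [h1.2]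
      rw [Matrix.mul_apply] at h4
      simp only [Matrix.conjTranspose_apply] at h4
      simp_rw [colB] at h4
      rw [Matrix.one_apply] at h4
      simp only [mul_ite, mul_one, mul_zero, Finset.sum_ite_eq', Finset.mem_univ,
        if_true] at h4
      have := congrArg star h4
      simpa [apply_ite (star : ℂ → ℂ)] using this
    have starkey : ∀ (a b : G) (c : G'),
        (∑ y, U a (c*y) * star (U b y)) = U (a*b⁻¹) c := by
      intro a b c
      have hmem : U * leftReg G' c * U.conjTranspose ∈ (lamAlg G : Set (Matrix G G ℂ)) := by
        rw [← himg]
        exact ⟨leftReg G' c, Submodule.subset_span ⟨c, rfl⟩, rfl⟩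
      have hc := circ_of_mem hmem a b
      rw [conj_entry, conj_entry] at hc
      rw [hc]
      simp_rw [rowB]
      simp [apply_ite (star : ℂ → ℂ), mul_ite, Finset.sum_ite_eq']
    have cond2 : ∀ (a : G) (b : G'), star (U a b) = U a⁻¹ b⁻¹ := by
      intro a b
      have hk := starkey 1 a b⁻¹
      simp only [rowB, inv_mul_eq_one, ite_mul, one_mul, zero_mul, one_mul] at hk
      rw [Finset.sum_ite_eq Finset.univ b (fun y => star (U a y))] at hk
      simpa using hk
    have cond3 : ∀ (a b : G) (c : G'),
        U (a*b) c = ∑ x : G', ∑ y : G', if x*y = c then U a x * U b y else 0 := by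
      intro a b c
      have hk := starkey a b⁻¹ c
      simp only [inv_inv] at hk
      have hs : ∀ y : G', star (U b⁻¹ y) = U b y⁻¹ := fun y => by rw [cond2]; simp
      simp_rw [hs] at hk
      rw [← hk, sum_reindex]
    exact ⟨h1, cond2, cond3⟩
end

section
/- Let G and G' be finite abelian groups of equal order with normalized character tables 𝒞 and 𝒞' respectively. Then a matrix U ∈ ℂ^{G×G'} is a (G,G')-transformation matrix if and only if U = 𝒞†·P^π·𝒞' for some bijection π from Ĝ' to Ĝ, where P^π is the Ĝ × Ĝ' permutation matrix with P^π_{χ,χ'} = 1 if χ = π(χ') and 0 otherwise. In particular, the set of (G,G')-transformation matrices is finite. -/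
open scoped BigOperators Classical

/-- The normalized character table of a finite abelian group `G`: the `Ĝ × G` matrix
with `(χ, a)` entry `χ(a)/√|G|`, where `Ĝ = G →* ℂˣ` is the character group. -/
noncomputable def charTable (G : Type*) [CommGroup G] [Fintype G] :
    Matrix (G →* ℂˣ) G ℂ :=
  Matrix.of fun χ a => ((χ a : ℂˣ) : ℂ) / (Real.sqrt (Fintype.card G) : ℂ)

/-- The `Ĝ × Ĝ'` permutation matrix of a bijection `π` from `Ĝ'` to `Ĝ`. -/
noncomputable def charPermMatrix {G G' : Type*} [CommGroup G] [CommGroup G']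
    (π : (G' →* ℂˣ) ≃ (G →* ℂˣ)) : Matrix (G →* ℂˣ) (G' →* ℂˣ) ℂ :=
  Matrix.of fun χ χ' => if χ = π χ' then 1 else 0

/-!
Write `X` for the unnormalized character matrix `(χ, a) ↦ χ a`, so that `𝒞 = X / √|G|` and
`X X† = |G| · 1 = X† X` by the orthogonality relations. For `U ∈ ℂ^{G×G'}` put `W = U X'†`,
i.e. `W a χ' = ∑ₓ U a x · conj (χ' x)`. Right multiplication by `X'†` is injective and turns the
convolution of rows into the pointwise product, so condition (3) says exactly that every column of
`W` is multiplicative. If moreover `U` is unitary then `W† W = |G'| · 1`: the columns of `W` are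
nonzero, hence characters `σ χ'` of `G`, and pairwise distinct, so `σ` is a bijection since
`|Ĝ'| = |G'| = |G| = |Ĝ|`. With `π χ' = (σ χ')⁻¹` this reads `U X'† = X† P^π`, which is
`U = 𝒞† P^π 𝒞'`. Conversely `𝒞† P^π 𝒞'` is a product of unitary matrices, and the columns
`a ↦ (π χ') a⁻¹` of its `W` are multiplicative.
-/

open scoped Matrix

-- Lets `IsSepClosed.hasEnoughRootsOfUnity` supply the roots of unity in `ℂ` that Mathlib's duality
-- theory of finite abelian groups asks for.
instance {G R : Type*} [LeftCancelMonoid G] [Finite G] [AddMonoidWithOne R] [CharZero R] :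
    NeZero ((Monoid.exponent G : R)) :=
  ⟨Nat.cast_ne_zero.2 Monoid.exponent_ne_zero_of_finite⟩

theorem exists_monoidHom_units_eq_of_map_mul {G M₀ : Type*} [Group G] [MonoidWithZero M₀]
    [IsLeftCancelMulZero M₀] {f : G → M₀} (hmul : ∀ a b, f (a * b) = f a * f b)
    (hne : ∃ a, f a ≠ 0) : ∃ χ : G →* M₀ˣ, ∀ a, (χ a : M₀) = f a := by
  obtain ⟨a₀, ha₀⟩ := hne
  have hone : f 1 = 1 := mul_left_cancel₀ ha₀ (by rw [← hmul, mul_one, mul_one])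
  exact ⟨(MonoidHom.mk ⟨f, hone⟩ hmul).toHomUnits, fun _ => rfl⟩

namespace Matrix

variable {l m n α : Type*} [Fintype m] [DecidableEq n] [Semiring α] [StarRing α]

/-- `Matrix.unitaryGroup` only covers square matrices with a single index type. -/
def IsUnitary [Fintype n] [DecidableEq m] (A : Matrix m n α) : Prop :=
  A * Aᴴ = 1 ∧ Aᴴ * A = 1

theorem IsUnitary.conjTranspose [Fintype n] [DecidableEq m] {A : Matrix m n α}
    (hA : A.IsUnitary) : Aᴴ.IsUnitary := by
  rw [IsUnitary, conjTranspose_conjTranspose]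
  exact hA.symm

theorem IsUnitary.mul [Fintype l] [Fintype n] [DecidableEq l] [DecidableEq m]
    {A : Matrix l m α} {B : Matrix m n α} (hA : A.IsUnitary) (hB : B.IsUnitary) :
    (A * B).IsUnitary := by
  constructor
  · rw [conjTranspose_mul, Matrix.mul_assoc, ← Matrix.mul_assoc B, hB.1, Matrix.one_mul, hA.1]
  · rw [conjTranspose_mul, Matrix.mul_assoc, ← Matrix.mul_assoc Aᴴ, hA.2, Matrix.one_mul, hB.2]

theorem isUnitary_one_submatrix [Fintype n] [DecidableEq m] (e : n ≃ m) :
    ((1 : Matrix m m α).submatrix id e).IsUnitary := by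
  constructor
  · simp [conjTranspose_submatrix]
  · simpa [conjTranspose_submatrix] using submatrix_mul_equiv (1 : Matrix m m α) 1 e (.refl m) e

theorem exists_ne_zero_of_conjTranspose_mul_self_eq_smul_one {W : Matrix m n α} {c : α}
    (hW : Wᴴ * W = c • 1) (hc : c ≠ 0) (j : n) : ∃ i, W i j ≠ 0 := by
  by_contra! h
  have hjj := congrFun (congrFun hW j) j
  simp only [mul_apply, conjTranspose_apply, h, star_zero, mul_zero, Finset.sum_const_zero,
    smul_apply, one_apply_eq, smul_eq_mul, mul_one] at hjj
  exact hc hjj.symm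

theorem transpose_injective_of_conjTranspose_mul_self_eq_smul_one {W : Matrix m n α} {c : α}
    (hW : Wᴴ * W = c • 1) (hc : c ≠ 0) : Function.Injective Wᵀ := by
  intro j k hjk
  by_contra hne
  have hjk' : (Wᴴ * W) j k = (Wᴴ * W) j j := by
    simp only [mul_apply, conjTranspose_apply, ← transpose_apply W, hjk]
  rw [hW, smul_apply, smul_apply, one_apply_ne hne, one_apply_eq, smul_zero, smul_eq_mul,
    mul_one] at hjk'
  exact hc hjk'.symm

end Matrix

namespace CharacterTable

section Characters

variable {H : Type*} [CommGroup H] [Fintype H]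

noncomputable def charMatrix (H : Type*) [CommGroup H] : Matrix (H →* ℂˣ) H ℂ :=
  Matrix.of fun χ a => ((χ a : ℂˣ) : ℂ)

theorem star_coe_apply (χ : H →* ℂˣ) (a : H) : star ((χ a : ℂˣ) : ℂ) = χ a⁻¹ := by
  have hpow : ((χ a : ℂˣ) : ℂ) ^ Fintype.card H = 1 := by
    rw [← Units.val_pow_eq_pow_val, ← map_pow, pow_card_eq_one, map_one, Units.val_one]
  rw [map_inv, Units.val_inv_eq_inv_val,
    Complex.inv_eq_conj (Complex.norm_eq_one_of_pow_eq_one hpow Fintype.card_ne_zero)]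
  rfl

theorem sum_coe_apply (χ : H →* ℂˣ) [Decidable (χ = 1)] :
    ∑ a, ((χ a : ℂˣ) : ℂ) = if χ = 1 then (Fintype.card H : ℂ) else 0 := by
  have hone : (Units.coeHom ℂ).comp χ = 1 ↔ χ = 1 := by
    simp only [MonoidHom.ext_iff, MonoidHom.comp_apply, Units.coeHom_apply, MonoidHom.one_apply,
      Units.val_eq_one]
  simpa only [hone, MonoidHom.comp_apply, Units.coeHom_apply, Nat.cast_ite, Nat.cast_zero] using
    sum_hom_units ((Units.coeHom ℂ).comp χ)

theorem charMatrix_mul_conjTranspose [DecidableEq (H →* ℂˣ)] :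
    charMatrix H * (charMatrix H)ᴴ = (Fintype.card H : ℂ) • 1 := by
  ext χ ψ
  have hterm : ∀ a, ((χ a : ℂˣ) : ℂ) * star ((ψ a : ℂˣ) : ℂ) = (((χ * ψ⁻¹) a : ℂˣ) : ℂ) := by
    intro a
    rw [star_coe_apply, MonoidHom.mul_apply, MonoidHom.inv_apply, map_inv, Units.val_mul]
  simp only [Matrix.mul_apply, Matrix.conjTranspose_apply, charMatrix, Matrix.of_apply, hterm,
    sum_coe_apply, Matrix.smul_apply, Matrix.one_apply, smul_eq_mul, mul_ite, mul_one, mul_zero]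
  exact if_congr (mul_inv_eq_one (G := H →* ℂˣ)) rfl rfl

theorem charTable_eq_smul :
    charTable H = ((Real.sqrt (Fintype.card H) : ℝ) : ℂ)⁻¹ • charMatrix H := by
  ext χ a
  simp [charTable, charMatrix, div_eq_inv_mul]

theorem conjTranspose_charTable_eq_smul :
    (charTable H)ᴴ = ((Real.sqrt (Fintype.card H) : ℝ) : ℂ)⁻¹ • (charMatrix H)ᴴ := by
  rw [charTable_eq_smul, Matrix.conjTranspose_smul, star_inv₀, Complex.star_def,
    Complex.conj_ofReal]

theorem inv_sqrt_card_mul_inv_sqrt_card_mul_card :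
    ((Real.sqrt (Fintype.card H) : ℝ) : ℂ)⁻¹ * ((Real.sqrt (Fintype.card H) : ℝ) : ℂ)⁻¹ *
      Fintype.card H = 1 := by
  rw [← mul_inv, ← Complex.ofReal_mul, Real.mul_self_sqrt (Nat.cast_nonneg _),
    Complex.ofReal_natCast, inv_mul_cancel₀ (Nat.cast_ne_zero.2 Fintype.card_ne_zero)]

variable [Fintype (H →* ℂˣ)]

theorem card_monoidHom_units_complex : Fintype.card (H →* ℂˣ) = Fintype.card H := by
  simpa only [Nat.card_eq_fintype_card] using
    CommGroup.card_monoidHom_of_hasEnoughRootsOfUnity H ℂ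

theorem sum_char_coe_apply [DecidableEq H] (a : H) :
    ∑ χ : H →* ℂˣ, ((χ a : ℂˣ) : ℂ) = if a = 1 then (Fintype.card H : ℂ) else 0 := by
  have hsep : (∀ χ : H →* ℂˣ, χ a = 1) ↔ a = 1 := by
    simpa only [map_one] using CommGroup.forall_apply_eq_apply_iff (M := ℂ) H (g := a) (g' := 1)
  simpa only [MonoidHom.eval_apply_apply, MonoidHom.ext_iff, MonoidHom.one_apply, hsep,
    card_monoidHom_units_complex] using sum_coe_apply (MonoidHom.eval a : (H →* ℂˣ) →* ℂˣ)

theorem conjTranspose_charMatrix_mul [DecidableEq H] :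
    (charMatrix H)ᴴ * charMatrix H = (Fintype.card H : ℂ) • 1 := by
  ext a b
  have hterm : ∀ χ : H →* ℂˣ,
      star ((χ a : ℂˣ) : ℂ) * ((χ b : ℂˣ) : ℂ) = ((χ (a⁻¹ * b) : ℂˣ) : ℂ) := by
    intro χ
    rw [star_coe_apply, map_mul, Units.val_mul]
  simp only [Matrix.mul_apply, Matrix.conjTranspose_apply, charMatrix, Matrix.of_apply, hterm,
    sum_char_coe_apply, inv_mul_eq_one, Matrix.smul_apply, Matrix.one_apply, smul_eq_mul, mul_ite,
    mul_one, mul_zero]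

theorem isUnitary_charTable [DecidableEq H] [DecidableEq (H →* ℂˣ)] :
    (charTable H).IsUnitary := by
  constructor
  · rw [conjTranspose_charTable_eq_smul, charTable_eq_smul, Matrix.smul_mul, Matrix.mul_smul,
      charMatrix_mul_conjTranspose, smul_smul, smul_smul,
      inv_sqrt_card_mul_inv_sqrt_card_mul_card, one_smul]
  · rw [conjTranspose_charTable_eq_smul, charTable_eq_smul, Matrix.smul_mul, Matrix.mul_smul,
      conjTranspose_charMatrix_mul, smul_smul, smul_smul,
      inv_sqrt_card_mul_inv_sqrt_card_mul_card, one_smul]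

theorem eq_inv_card_smul_mul_conjTranspose_mul {m : Type*} (U : Matrix m H ℂ) :
    U = (Fintype.card H : ℂ)⁻¹ • (U * (charMatrix H)ᴴ * charMatrix H) := by
  rw [Matrix.mul_assoc, conjTranspose_charMatrix_mul, Matrix.mul_smul, Matrix.mul_one, smul_smul,
    inv_mul_cancel₀ (Nat.cast_ne_zero.2 Fintype.card_ne_zero), one_smul]

theorem mul_conjTranspose_charMatrix_injective {m : Type*} :
    Function.Injective fun A : Matrix m H ℂ => A * (charMatrix H)ᴴ := by
  intro A B h
  rw [eq_inv_card_smul_mul_conjTranspose_mul A, eq_inv_card_smul_mul_conjTranspose_mul B]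
  exact congrArg (fun V => (Fintype.card H : ℂ)⁻¹ • (V * charMatrix H)) h

end Characters

section Convolution

variable {H M : Type*} [CommGroup H] [Fintype H] [DecidableEq H]

theorem sum_conv_mul_star_coe_apply (U : Matrix M H ℂ) (a b : M) (χ : H →* ℂˣ) :
    ∑ c, (∑ x, ∑ y, if x * y = c then U a x * U b y else 0) * star ((χ c : ℂˣ) : ℂ) =
      (U * (charMatrix H)ᴴ) a χ * (U * (charMatrix H)ᴴ) b χ := by
  simp only [Matrix.mul_apply, Matrix.conjTranspose_apply, charMatrix, Matrix.of_apply]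
  rw [Finset.sum_mul_sum]
  simp only [Finset.sum_mul, ite_mul, zero_mul]
  conv_lhs => rw [Finset.sum_comm]
  refine Finset.sum_congr rfl fun x _ => ?_
  conv_lhs => rw [Finset.sum_comm]
  refine Finset.sum_congr rfl fun y _ => ?_
  rw [Finset.sum_ite_eq, if_pos (Finset.mem_univ _), map_mul, Units.val_mul, star_mul']
  ring

theorem conv_iff_map_mul [Mul M] [Fintype (H →* ℂˣ)] (U : Matrix M H ℂ) :
    (∀ a b c, U (a * b) c = ∑ x, ∑ y, if x * y = c then U a x * U b y else 0) ↔
      ∀ a b χ, (U * (charMatrix H)ᴴ) (a * b) χ =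
        (U * (charMatrix H)ᴴ) a χ * (U * (charMatrix H)ᴴ) b χ := by
  set W := U * (charMatrix H)ᴴ
  have hshift : ∀ b, (Matrix.of fun a c => U (a * b) c) * (charMatrix H)ᴴ =
      Matrix.of fun a χ => W (a * b) χ := fun _ => rfl
  have hconv : ∀ b, (Matrix.of fun a c => ∑ x, ∑ y, if x * y = c then U a x * U b y else 0) *
      (charMatrix H)ᴴ = Matrix.of fun a χ => W a χ * W b χ := fun b => by
    ext a χ
    exact sum_conv_mul_star_coe_apply U a b χ
  calc _ ↔ ∀ b, (Matrix.of fun a c => U (a * b) c) =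
        Matrix.of fun a c => ∑ x, ∑ y, if x * y = c then U a x * U b y else 0 := by
        simp only [← Matrix.ext_iff, Matrix.of_apply]
        exact forall_comm
    _ ↔ ∀ b, (Matrix.of fun a χ => W (a * b) χ) = Matrix.of fun a χ => W a χ * W b χ := by
        simp only [← hshift, ← hconv, mul_conjTranspose_charMatrix_injective.eq_iff]
    _ ↔ _ := by
        simp only [← Matrix.ext_iff, Matrix.of_apply]
        exact forall_comm

end Convolution

section TransformationMatrix

variable {G G' : Type*} [CommGroup G] [CommGroup G']

theorem charPermMatrix_eq_submatrix [DecidableEq (G →* ℂˣ)] (π : (G' →* ℂˣ) ≃ (G →* ℂˣ)) :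
    charPermMatrix π = (1 : Matrix _ _ ℂ).submatrix id π := by
  ext χ χ'
  simp [charPermMatrix, Matrix.one_apply]

theorem isUnitary_charPermMatrix [Fintype (G →* ℂˣ)] [Fintype (G' →* ℂˣ)]
    [DecidableEq (G →* ℂˣ)] [DecidableEq (G' →* ℂˣ)]
    (π : (G' →* ℂˣ) ≃ (G →* ℂˣ)) : (charPermMatrix π).IsUnitary := by
  rw [charPermMatrix_eq_submatrix]
  exact Matrix.isUnitary_one_submatrix π

theorem conjTranspose_charMatrix_mul_charPermMatrix_apply [Fintype G] [Fintype (G →* ℂˣ)]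
    (π : (G' →* ℂˣ) ≃ (G →* ℂˣ)) (a : G) (χ' : G' →* ℂˣ) :
    ((charMatrix G)ᴴ * charPermMatrix π) a χ' = ((π χ' a⁻¹ : ℂˣ) : ℂ) := by
  simp [Matrix.mul_apply, charPermMatrix, charMatrix, star_coe_apply]

variable [Fintype G] [Fintype G'] [Fintype (G →* ℂˣ)] [Fintype (G' →* ℂˣ)]

noncomputable def permTransMat (π : (G' →* ℂˣ) ≃ (G →* ℂˣ)) : Matrix G G' ℂ :=
  (charTable G)ᴴ * charPermMatrix π * charTable G'

theorem permTransMat_mul_conjTranspose_charMatrix (hcard : Fintype.card G = Fintype.card G')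
    (π : (G' →* ℂˣ) ≃ (G →* ℂˣ)) :
    permTransMat π * (charMatrix G')ᴴ = (charMatrix G)ᴴ * charPermMatrix π := by
  rw [permTransMat, conjTranspose_charTable_eq_smul, charTable_eq_smul]
  simp only [Matrix.smul_mul, Matrix.mul_smul, Matrix.mul_assoc, charMatrix_mul_conjTranspose,
    Matrix.mul_one, smul_smul]
  rw [← hcard, inv_sqrt_card_mul_inv_sqrt_card_mul_card, one_smul]

theorem eq_permTransMat_iff (hcard : Fintype.card G = Fintype.card G')
    (π : (G' →* ℂˣ) ≃ (G →* ℂˣ)) (U : Matrix G G' ℂ) :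
    U = permTransMat π ↔ U * (charMatrix G')ᴴ = (charMatrix G)ᴴ * charPermMatrix π := by
  rw [← permTransMat_mul_conjTranspose_charMatrix hcard π]
  exact mul_conjTranspose_charMatrix_injective.eq_iff.symm

variable [DecidableEq G] [DecidableEq G']

theorem isTransMat_permTransMat (hcard : Fintype.card G = Fintype.card G')
    (π : (G' →* ℂˣ) ≃ (G →* ℂˣ)) : IsTransMat (permTransMat π) := by
  set U := permTransMat π
  have hU : U * (charMatrix G')ᴴ = (charMatrix G)ᴴ * charPermMatrix π :=
    (eq_permTransMat_iff hcard π U).1 rfl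
  refine ⟨(isUnitary_charTable.conjTranspose.mul (isUnitary_charPermMatrix π)).mul
    isUnitary_charTable, fun a b => ?_, (conv_iff_map_mul U).2 fun a b χ' => ?_⟩
  · rw [eq_inv_card_smul_mul_conjTranspose_mul U, hU, Matrix.smul_apply, Matrix.smul_apply,
      Matrix.mul_apply, Matrix.mul_apply]
    simp only [conjTranspose_charMatrix_mul_charPermMatrix_apply]
    simp only [charMatrix, Matrix.of_apply, smul_eq_mul, star_mul', star_sum, star_inv₀,
      star_natCast, star_coe_apply, inv_inv]
  · simp only [hU, conjTranspose_charMatrix_mul_charPermMatrix_apply, mul_inv, map_mul,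
      Units.val_mul]

theorem exists_eq_permTransMat_of_isTransMat (hcard : Fintype.card G = Fintype.card G')
    {U : Matrix G G' ℂ} (hU : IsTransMat U) :
    ∃ π : (G' →* ℂˣ) ≃ (G →* ℂˣ), U = permTransMat π := by
  obtain ⟨⟨-, hUU⟩, -, hconv⟩ := hU
  set W := U * (charMatrix G')ᴴ
  have hn : (Fintype.card G' : ℂ) ≠ 0 := Nat.cast_ne_zero.2 Fintype.card_ne_zero
  have hWW : Wᴴ * W = (Fintype.card G' : ℂ) • 1 := by
    rw [Matrix.conjTranspose_mul, Matrix.conjTranspose_conjTranspose, Matrix.mul_assoc,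
      ← Matrix.mul_assoc Uᴴ, hUU, Matrix.one_mul, charMatrix_mul_conjTranspose]
  have hchar : ∀ χ', ∃ σ : G →* ℂˣ, ∀ a, (σ a : ℂ) = W a χ' := fun χ' =>
    exists_monoidHom_units_eq_of_map_mul (fun a b => (conv_iff_map_mul U).1 hconv a b χ')
      (Matrix.exists_ne_zero_of_conjTranspose_mul_self_eq_smul_one hWW hn χ')
  choose σ hσ using hchar
  have hσinj : Function.Injective σ := fun χ₁ χ₂ h =>
    Matrix.transpose_injective_of_conjTranspose_mul_self_eq_smul_one hWW hn <| funext fun a => by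
      simp only [Matrix.transpose_apply, ← hσ, h]
  have hσbij : Function.Bijective σ := (Fintype.bijective_iff_injective_and_card σ).2
    ⟨hσinj, by rw [card_monoidHom_units_complex, card_monoidHom_units_complex, hcard]⟩
  refine ⟨(Equiv.ofBijective σ hσbij).trans (Equiv.inv _),
    (eq_permTransMat_iff hcard _ U).2 (Matrix.ext fun a χ' => ?_)⟩
  simp [conjTranspose_charMatrix_mul_charPermMatrix_apply, hσ, W]

end TransformationMatrix

end CharacterTable

open CharacterTable

/-- For finite abelian groups `G`, `G'` of equal order with normalized
character tables `𝒞`, `𝒞'`, a matrix `U ∈ ℂ^{G×G'}` is a `(G,G')`-transformation matrix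
iff `U = 𝒞† P^π 𝒞'` for some bijection `π : Ĝ' → Ĝ`; in particular the set of
`(G,G')`-transformation matrices is finite. -/
theorem stmt15 {G G' : Type*} [CommGroup G] [CommGroup G'] [Fintype G] [Fintype G']
    [DecidableEq G] [DecidableEq G']
    [Fintype (G →* ℂˣ)] [Fintype (G' →* ℂˣ)]
    (hcard : Fintype.card G = Fintype.card G') :
    (∀ U : Matrix G G' ℂ,
      IsTransMat U ↔
        ∃ π : (G' →* ℂˣ) ≃ (G →* ℂˣ),
          U = (charTable G).conjTranspose * charPermMatrix π * charTable G') ∧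
    {U : Matrix G G' ℂ | IsTransMat U}.Finite := by
  have hiff : ∀ U : Matrix G G' ℂ, IsTransMat U ↔ ∃ π, U = permTransMat π := fun U =>
    ⟨exists_eq_permTransMat_of_isTransMat hcard,
      fun ⟨π, hπ⟩ => hπ ▸ isTransMat_permTransMat hcard π⟩
  refine ⟨hiff, (Set.finite_range permTransMat).subset fun U hU => ?_⟩
  obtain ⟨π, rfl⟩ := (hiff U).1 hU
  exact ⟨π, rfl⟩
end
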